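/- arXiv:2112.08953 — 5 statements merged into one kernel-verified Lean document; each statement's English description precedes it below -/
import Mathlib

section
/- Every finite tree (viewed as a trigraph with all edges black and no red edges) has twin-width at most 2. -/
/-- A *trigraph*: a vertex set with disjoint sets of black edges and red edges. -/
structure Trigraph (V : Type) where
  black : SimpleGraph V
  red : SimpleGraph V
  disj : ∀ u v : V, black.Adj u v → ¬ red.Adj u v

namespace Trigraph

variable {V W : Type}

/-- Adjacency in the total graph of a trigraph. -/
def TotAdj (G : Trigraph V) (u v : V) : Prop :=
  G.black.Adj u v ∨ G.red.Adj u v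

theorem totAdj_symm (G : Trigraph V) {u v : V} (h : G.TotAdj u v) : G.TotAdj v u :=
  Or.imp (fun h' => h'.symm) (fun h' => h'.symm) h

/-- The trigraph associated with a partition (setoid) of the vertex set of `G`:
two distinct parts are joined by a black edge if every pair between them is a black
edge of `G`, and by a red edge if some pair between them is (black or red) adjacent
but not every pair is a black edge. This is the trigraph obtained by contracting
every part of the partition. -/
def quot (G : Trigraph V) (P : Setoid V) : Trigraph (Quotient P) where
  black :=
    { Adj := fun XX YY => XX ≠ YY ∧
        ∀ a b : V, Quotient.mk P a = XX → Quotient.mk P b = YY → G.black.Adj a b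
      symm := ⟨fun XX YY h => ⟨h.1.symm, fun a b ha hb => (h.2 b a hb ha).symm⟩⟩
      loopless := ⟨fun XX h => h.1 rfl⟩ }
  red :=
    { Adj := fun XX YY => XX ≠ YY ∧
        (¬ ∀ a b : V, Quotient.mk P a = XX → Quotient.mk P b = YY → G.black.Adj a b) ∧
        ∃ a b : V, Quotient.mk P a = XX ∧ Quotient.mk P b = YY ∧ G.TotAdj a b
      symm := ⟨fun XX YY h => ⟨h.1.symm,
        fun hc => h.2.1 (fun a b ha hb => (hc b a hb ha).symm), by
          obtain ⟨a, b2, ha, hb, hab⟩ := h.2.2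
          exact ⟨b2, a, hb, ha, totAdj_symm G hab⟩⟩⟩
      loopless := ⟨fun XX h => h.1 rfl⟩ }
  disj := fun XX YY hb hr => hr.2.1 hb.2

/-- The setoid obtained from `P` by merging the classes of `u` and `v`. -/
def mergeSetoid (P : Setoid V) (u v : V) : Setoid V where
  r a b := P.r a b ∨ (P.r a u ∧ P.r v b) ∨ (P.r a v ∧ P.r u b)
  iseqv := by
    constructor
    · exact fun a => Or.inl (P.iseqv.refl a)
    · rintro a b (h | ⟨h1, h2⟩ | ⟨h1, h2⟩)
      · exact Or.inl (P.iseqv.symm h)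
      · exact Or.inr (Or.inr ⟨P.iseqv.symm h2, P.iseqv.symm h1⟩)
      · exact Or.inr (Or.inl ⟨P.iseqv.symm h2, P.iseqv.symm h1⟩)
    · rintro a b c (h | ⟨h1, h2⟩ | ⟨h1, h2⟩) (g | ⟨g1, g2⟩ | ⟨g1, g2⟩)
      · exact Or.inl (P.iseqv.trans h g)
      · exact Or.inr (Or.inl ⟨P.iseqv.trans h g1, g2⟩)
      · exact Or.inr (Or.inr ⟨P.iseqv.trans h g1, g2⟩)
      · exact Or.inr (Or.inl ⟨h1, P.iseqv.trans h2 g⟩)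
      · exact Or.inl (P.iseqv.trans h1
          (P.iseqv.trans (P.iseqv.symm (P.iseqv.trans h2 g1)) g2))
      · exact Or.inl (P.iseqv.trans h1 g2)
      · exact Or.inr (Or.inr ⟨h1, P.iseqv.trans h2 g⟩)
      · exact Or.inl (P.iseqv.trans h1 g2)
      · exact Or.inl (P.iseqv.trans h1
          (P.iseqv.trans (P.iseqv.symm (P.iseqv.trans h2 g1)) g2))

/-- `Q` is obtained from `P` by merging two distinct parts. -/
def MergeStep (P Q : Setoid V) : Prop :=
  ∃ u v : V, ¬ P.r u v ∧ Q = mergeSetoid P u v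

/-- The trigraph `G` has red degree at most `d`. -/
def RedDegLE (G : Trigraph V) (d : ℕ) : Prop :=
  ∀ x : V, (G.red.neighborSet x).ncard ≤ d

/-- A partial contraction sequence, recorded as the list of successive partitions of
the vertex set: it starts at the discrete partition and each partition is obtained
from the previous one by merging two parts (i.e. by one contraction). -/
def IsPartialContractionSeq (L : List (Setoid V)) : Prop :=
  L.head? = some ⊥ ∧ L.Chain' MergeStep

/-- A partial `d`-sequence of the trigraph `G`: a partial contraction sequence all of
whose associated trigraphs have red degree at most `d`. -/
def IsPartialSeq (G : Trigraph V) (d : ℕ) (L : List (Setoid V)) : Prop :=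
  IsPartialContractionSeq L ∧ ∀ P ∈ L, (G.quot P).RedDegLE d

/-- A (complete) `d`-sequence of the trigraph `G`: a partial `d`-sequence ending at
the one-vertex trigraph, i.e. at the partition with a single part. -/
def IsSeq (G : Trigraph V) (d : ℕ) (L : List (Setoid V)) : Prop :=
  G.IsPartialSeq d L ∧ L.getLast? = some ⊤

/-- `G` admits a `d`-sequence. -/
def HasSeq (G : Trigraph V) (d : ℕ) : Prop := ∃ L, G.IsSeq d L

/-- The twin-width of a trigraph: the least `d` such that it admits a `d`-sequence. -/
noncomputable def tww (G : Trigraph V) : ℕ := sInf {d | G.HasSeq d}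

/-- The induced subtrigraph on a set of vertices. -/
def induce (G : Trigraph V) (W : Set V) : Trigraph W where
  black := SimpleGraph.induce W G.black
  red := SimpleGraph.induce W G.red
  disj := fun u v hb hr => G.disj u v hb hr

/-- An isomorphism of trigraphs: a vertex bijection preserving black edges, red
edges, and non-edges. -/
structure Iso (G : Trigraph V) (H : Trigraph W) where
  toEquiv : V ≃ W
  black_iff : ∀ a b : V, H.black.Adj (toEquiv a) (toEquiv b) ↔ G.black.Adj a b
  red_iff : ∀ a b : V, H.red.Adj (toEquiv a) (toEquiv b) ↔ G.red.Adj a b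

/-- A graph, viewed as a trigraph with no red edges. -/
def ofGraph (G : SimpleGraph V) : Trigraph V :=
  ⟨G, ⊥, fun _ _ _ h => h⟩

end Trigraph

/-!
Root the tree and contract it bottom-up. The subtree below a vertex `r` is contracted by
contracting the subtrees of the children of `r` one at a time, each time merging the finished
subtree into the part formed by the previously finished ones, and finally merging `r` into the
result. At every moment each nontrivial part is a union of subtrees hanging from a single
vertex that is still a singleton part, and at most two nontrivial parts hang from any vertex
(the finished children and the child being processed). In the contracted trigraph a red edge
joins a nontrivial part only to the vertex it hangs from, so all red degrees are at most 2.
-/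

namespace Setoid

variable {α : Type*}

def collapse (s : Set α) : Setoid α where
  r a b := a = b ∨ (a ∈ s ∧ b ∈ s)
  iseqv :=
    { refl := fun _ => Or.inl rfl
      symm := fun h => h.imp Eq.symm And.symm
      trans := by
        rintro a b c (rfl | ⟨ha, hb⟩) hbc
        · exact hbc
        · rcases hbc with rfl | ⟨-, hc⟩
          exacts [Or.inr ⟨ha, hb⟩, Or.inr ⟨ha, hc⟩] }

theorem collapse_rel {s : Set α} {a b : α} : collapse s a b ↔ a = b ∨ (a ∈ s ∧ b ∈ s) :=
  Iff.rfl

theorem collapse_of_subsingleton {s : Set α} (hs : s.Subsingleton) : collapse s = ⊥ :=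
  Setoid.ext fun _ _ => or_iff_left_of_imp fun h => hs h.1 h.2

theorem collapse_mono {s t : Set α} (hst : s ⊆ t) : collapse s ≤ collapse t :=
  fun _ _ h => h.imp_right fun h => ⟨hst h.1, hst h.2⟩

theorem collapse_univ : collapse (Set.univ : Set α) = ⊤ :=
  Setoid.ext fun _ _ => iff_of_true (Or.inr ⟨trivial, trivial⟩) trivial

def IsSingletonClass (r : Setoid α) (x : α) : Prop :=
  ∀ y, r x y → y = x

theorem IsSingletonClass.of_rel {r : Setoid α} {x y : α} (hy : r.IsSingletonClass y)
    (hxy : r x y) : r.IsSingletonClass x :=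
  fun z hz => (hy z (r.trans' (r.symm' hxy) hz)).trans (hy x (r.symm' hxy)).symm

theorem IsSingletonClass.of_le {r s : Setoid α} (hrs : r ≤ s) {x : α}
    (hx : s.IsSingletonClass x) : r.IsSingletonClass x :=
  fun y h => hx y (hrs h)

theorem isSingletonClass_of_le_collapse {r : Setoid α} {s : Set α} (hr : r ≤ collapse s)
    {x : α} (hx : x ∉ s) : r.IsSingletonClass x :=
  fun _ h => ((hr h).resolve_right fun h => hx h.1).symm

theorem rel_or_rel_of_le_collapse {r s : Setoid α} {S T : Set α} (hr : r ≤ collapse S)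
    (hs : s ≤ collapse T) (hST : Disjoint S T) {a b c : α} (hab : r a b) (hbc : s b c) :
    r a c ∨ s a c := by
  rcases hr hab with rfl | ⟨-, hb⟩
  · exact Or.inr hbc
  rcases hs hbc with rfl | ⟨hb', -⟩
  · exact Or.inl hab
  exact (hST.notMem_of_mem_left hb hb').elim

theorem sup_rel_of_le_collapse {r s : Setoid α} {S T : Set α} (hr : r ≤ collapse S)
    (hs : s ≤ collapse T) (hST : Disjoint S T) {a b : α} : (r ⊔ s) a b ↔ r a b ∨ s a b := by
  let t : Setoid α :=
    { r := fun a b => r a b ∨ s a b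
      iseqv :=
        { refl := fun a => Or.inl (r.refl' a)
          symm := fun h => h.imp r.symm' s.symm'
          trans := by
            rintro a b c (hab | hab) (hbc | hbc)
            · exact Or.inl (r.trans' hab hbc)
            · exact rel_or_rel_of_le_collapse hr hs hST hab hbc
            · exact (rel_or_rel_of_le_collapse hs hr hST.symm hab hbc).symm
            · exact Or.inr (s.trans' hab hbc) } }
  have : r ⊔ s = t := le_antisymm (sup_le (fun _ _ => Or.inl) (fun _ _ => Or.inr))
    fun _ _ h => h.elim (fun h => le_sup_left (b := s) h) (fun h => le_sup_right (a := r) h)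
  rw [this]
  rfl

theorem sup_collapse_rel_iff_of_notMem {r : Setoid α} {S A : Set α} (hr : r ≤ collapse S)
    (hSA : Disjoint S A) {x a : α} (hx : x ∉ A) : (r ⊔ collapse A) x a ↔ r x a := by
  rw [sup_rel_of_le_collapse hr le_rfl hSA, collapse_rel]
  exact ⟨fun h => h.elim id (·.elim (· ▸ r.refl' x) fun h => (hx h.1).elim), Or.inl⟩

theorem mem_of_sup_collapse_rel {r : Setoid α} {S A : Set α} (hr : r ≤ collapse S)
    (hSA : Disjoint S A) {x a : α} (hx : x ∈ A) (h : (r ⊔ collapse A) x a) : a ∈ A := by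
  rcases (sup_rel_of_le_collapse hr le_rfl hSA).1 h with h | rfl | h
  · rwa [isSingletonClass_of_le_collapse hr (hSA.notMem_of_mem_right hx) a h]
  · exact hx
  · exact h.2

theorem collapse_union_eq_sup {S T : Set α} {s t : α} (hs : s ∈ S) (ht : t ∈ T) :
    collapse (S ∪ T) = collapse S ⊔ collapse T ⊔ collapse {s, t} := by
  refine le_antisymm ?_ (sup_le (sup_le (collapse_mono Set.subset_union_left)
    (collapse_mono Set.subset_union_right)) (collapse_mono ?_))
  · set R := collapse S ⊔ collapse T ⊔ collapse {s, t}
    have hS : collapse S ≤ R := le_sup_left.trans le_sup_left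
    have hT : collapse T ≤ R := le_sup_right.trans le_sup_left
    have hst : R s t := (le_sup_right : collapse {s, t} ≤ R) (Or.inr ⟨.inl rfl, .inr rfl⟩)
    rintro a b (rfl | ⟨ha | ha, hb | hb⟩)
    · exact R.refl' a
    · exact hS (Or.inr ⟨ha, hb⟩)
    · exact R.trans' (R.trans' (hS (Or.inr ⟨ha, hs⟩)) hst) (hT (Or.inr ⟨ht, hb⟩))
    · exact R.trans' (R.trans' (hT (Or.inr ⟨ha, ht⟩)) (R.symm' hst)) (hS (Or.inr ⟨hs, hb⟩))
    · exact hT (Or.inr ⟨ha, hb⟩)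
  · rintro x (rfl | rfl)
    exacts [.inl hs, .inr ht]

end Setoid

namespace Trigraph

open Setoid

variable {V : Type}

theorem mergeSetoid_eq_sup (P : Setoid V) (u v : V) :
    mergeSetoid P u v = P ⊔ collapse {u, v} := by
  refine le_antisymm ?_ (sup_le (fun _ _ => Or.inl) ?_)
  · have huv : (P ⊔ collapse {u, v}) u v := le_sup_right (a := P) (Or.inr ⟨.inl rfl, .inr rfl⟩)
    have hP : P ≤ P ⊔ collapse {u, v} := le_sup_left
    rintro a b (h | ⟨hau, hvb⟩ | ⟨hav, hub⟩)
    · exact hP h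
    · exact Setoid.trans' _ (Setoid.trans' _ (hP hau) huv) (hP hvb)
    · exact Setoid.trans' _ (Setoid.trans' _ (hP hav) (Setoid.symm' _ huv)) (hP hub)
  · rintro a b (rfl | ⟨rfl | rfl, rfl | rfl⟩)
    all_goals first
      | exact Or.inl (P.refl' _)
      | exact Or.inr (Or.inl ⟨P.refl' _, P.refl' _⟩)
      | exact Or.inr (Or.inr ⟨P.refl' _, P.refl' _⟩)

theorem mergeStep_iff {P Q : Setoid V} :
    MergeStep P Q ↔ ∃ u v, ¬ P u v ∧ Q = P ⊔ collapse {u, v} := by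
  simp only [MergeStep, mergeSetoid_eq_sup]

theorem MergeStep.le {P Q : Setoid V} (h : MergeStep P Q) : P ≤ Q := by
  obtain ⟨u, v, -, rfl⟩ := mergeStep_iff.1 h
  exact le_sup_left

theorem MergeStep.sup_of_le_collapse {P P' Q : Setoid V} {S T : Set V} (h : MergeStep P P')
    (hP' : P' ≤ collapse S) (hQ : Q ≤ collapse T) (hST : Disjoint S T) :
    MergeStep (P ⊔ Q) (P' ⊔ Q) := by
  have hP : P ≤ collapse S := h.le.trans hP'
  obtain ⟨u, v, huv, rfl⟩ := mergeStep_iff.1 h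
  obtain ⟨hu, -⟩ : u ∈ S ∧ v ∈ S :=
    (hP' (le_sup_right (a := P) (Or.inr ⟨.inl rfl, .inr rfl⟩))).resolve_left
      fun h => huv (h ▸ P.refl' u)
  refine mergeStep_iff.2 ⟨u, v, ?_, sup_right_comm _ _ _⟩
  rw [sup_rel_of_le_collapse hP hQ hST]
  exact not_or.2 ⟨huv, fun h => huv
    (isSingletonClass_of_le_collapse hQ (hST.notMem_of_mem_left hu) v h ▸ P.refl' u)⟩

theorem mergeStep_collapse_union {S T : Set V} {s t : V} (hST : Disjoint S T) (hs : s ∈ S)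
    (ht : t ∈ T) : MergeStep (collapse S ⊔ collapse T) (collapse (S ∪ T)) := by
  refine mergeStep_iff.2 ⟨s, t, ?_, collapse_union_eq_sup hs ht⟩
  rw [sup_rel_of_le_collapse le_rfl le_rfl hST, collapse_rel, collapse_rel]
  rintro ((rfl | ⟨-, h⟩) | (rfl | ⟨h, -⟩))
  exacts [hST.notMem_of_mem_left hs ht, hST.notMem_of_mem_left h ht,
    hST.notMem_of_mem_left hs ht, hST.notMem_of_mem_left hs h]

theorem hasSeq_of_reflTransGen {G : Trigraph V} {d : ℕ} {p : Setoid V → Prop}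
    (hp : ∀ P, p P → (G.quot P).RedDegLE d) (hbot : p ⊥)
    (h : Relation.ReflTransGen (fun P Q => MergeStep P Q ∧ p Q) ⊥ ⊤) : G.HasSeq d := by
  obtain ⟨l, hl, hlast⟩ := List.exists_isChain_cons_of_relationReflTransGen h
  refine ⟨⊥ :: l, ⟨⟨rfl, hl.imp fun _ _ => And.left⟩, ?_⟩, ?_⟩
  · rintro P (_ | ⟨_, hP⟩)
    · exact hp _ hbot
    · exact hp _ (hl.cons_induction p l (fun _ _ h _ => h.2) hbot P hP)
  · rw [List.getLast?_eq_some_getLast (List.cons_ne_nil _ _), hlast]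

theorem ofGraph_quot_red_adj {G : SimpleGraph V} {P : Setoid V} {x y : V}
    (h : ((ofGraph G).quot P).red.Adj (Quotient.mk P x) (Quotient.mk P y)) :
    ¬ P x y ∧ ¬ (P.IsSingletonClass x ∧ P.IsSingletonClass y) ∧
      ∃ a b, P x a ∧ P y b ∧ G.Adj a b := by
  obtain ⟨hne, hnotblack, a, b, ha, hb, hab | hab⟩ := h
  · replace ha : P x a := P.symm' (Quotient.exact ha)
    replace hb : P y b := P.symm' (Quotient.exact hb)
    refine ⟨fun hxy => hne (Quotient.sound hxy), ?_, a, b, ha, hb, hab⟩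
    rintro ⟨hx, hy⟩
    refine hnotblack fun a' b' ha' hb' => ?_
    rw [hx a' (P.symm' (Quotient.exact ha')), hy b' (P.symm' (Quotient.exact hb')),
      ← hx a ha, ← hy b hb]
    exact hab
  · exact hab.elim

end Trigraph

namespace SimpleGraph

open Setoid Trigraph Relation

variable {V : Type} {G : SimpleGraph V}

variable (G) in
structure IsPendantPartition (P : Setoid V) : Prop where
  exists_attachment : ∀ x, ¬ P.IsSingletonClass x →
    ∃ ρ, ∀ a b, P x a → ¬ P x b → G.Adj a b → b = ρ
  exists_pair_cover : ∀ ρ, P.IsSingletonClass ρ →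
    ∃ y z, ∀ a, ¬ P.IsSingletonClass a → G.Adj a ρ → P a y ∨ P a z

theorem IsPendantPartition.redDegLE {P : Setoid V} (h : G.IsPendantPartition P) :
    ((ofGraph G).quot P).RedDegLE 2 := by
  rintro ⟨x⟩
  obtain ⟨y, z, hyz⟩ : ∃ y z, ∀ w,
      ((ofGraph G).quot P).red.Adj (Quotient.mk P x) (Quotient.mk P w) → P w y ∨ P w z := by
    by_cases hx : P.IsSingletonClass x
    · obtain ⟨y, z, hyz⟩ := h.exists_pair_cover x hx
      refine ⟨y, z, fun w hw => ?_⟩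
      obtain ⟨-, hs, a, b, hxa, hwb, hab⟩ := ofGraph_quot_red_adj hw
      obtain rfl := hx a hxa
      have hb : ¬ P.IsSingletonClass b := fun hb => hs ⟨hx, hb.of_rel hwb⟩
      exact (hyz b hb hab.symm).imp (P.trans' hwb) (P.trans' hwb)
    · obtain ⟨ρ, hρ⟩ := h.exists_attachment x hx
      refine ⟨ρ, ρ, fun w hw => ?_⟩
      obtain ⟨hxw, -, a, b, hxa, hwb, hab⟩ := ofGraph_quot_red_adj hw
      obtain rfl := hρ a b hxa (fun hxb => hxw (P.trans' hxb (P.symm' hwb))) hab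
      exact Or.inl hwb
  have hsub : ((ofGraph G).quot P).red.neighborSet (Quotient.mk P x) ⊆
      {Quotient.mk P y, Quotient.mk P z} := by
    rintro ⟨w⟩ hw
    exact (hyz w hw).imp Quotient.sound Quotient.sound
  calc _ ≤ ({Quotient.mk P y, Quotient.mk P z} : Set (Quotient P)).ncard :=
        Set.ncard_le_ncard hsub (Set.toFinite _)
    _ ≤ 2 := (Set.ncard_insert_le _ _).trans (by rw [Set.ncard_singleton])

theorem isPendantPartition_collapse {B : Set V} {ρ : V}
    (hB : ∀ a ∈ B, ∀ b ∉ B, G.Adj a b → b = ρ) : G.IsPendantPartition (collapse B) where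
  exists_attachment x hx := by
    have hxB : x ∈ B := by_contra fun hxB => hx (isSingletonClass_of_le_collapse le_rfl hxB)
    refine ⟨ρ, fun a b hxa hxb hab => hB a ?_ b (fun hb => hxb (Or.inr ⟨hxB, hb⟩)) hab⟩
    exact hxa.elim (· ▸ hxB) And.right
  exists_pair_cover _ _ := by
    rcases B.eq_empty_or_nonempty with rfl | ⟨y, hy⟩
    · exact ⟨ρ, ρ, fun a ha => (ha (isSingletonClass_of_le_collapse le_rfl id)).elim⟩
    · refine ⟨y, y, fun a ha _ => Or.inl (Or.inr ⟨?_, hy⟩)⟩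
      exact by_contra fun haB => ha (isSingletonClass_of_le_collapse le_rfl haB)

theorem isPendantPartition_bot : G.IsPendantPartition ⊥ where
  exists_attachment _ hx := (hx fun _ h => h.symm).elim
  exists_pair_cover ρ _ := ⟨ρ, ρ, fun _ ha _ => (ha fun _ h => h.symm).elim⟩

theorem IsPendantPartition.sup_collapse {P : Setoid V} {S A : Set V} {r c : V}
    (hP : G.IsPendantPartition P) (hPS : P ≤ collapse S) (hSA : Disjoint S A)
    (hA : ∀ a ∈ A, ∀ b ∉ A, G.Adj a b → b = r) (hc : ∀ a ∈ S, G.Adj a r → a = c) :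
    G.IsPendantPartition (P ⊔ collapse A) := by
  set Q := P ⊔ collapse A
  have hPQ : P ≤ Q := le_sup_left
  have hAQ : collapse A ≤ Q := le_sup_right
  have hQ_of_notMem : ∀ {x a}, x ∉ A → (Q x a ↔ P x a) :=
    sup_collapse_rel_iff_of_notMem hPS hSA
  have hnontrivial : ∀ {x}, x ∉ A → ¬ Q.IsSingletonClass x → ¬ P.IsSingletonClass x :=
    fun hx hQx hPx => hQx fun a ha => hPx a ((hQ_of_notMem hx).1 ha)
  constructor
  · intro x hx
    by_cases hxA : x ∈ A
    · exact ⟨r, fun a b hxa hxb => hA a (mem_of_sup_collapse_rel hPS hSA hxA hxa) b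
        (fun hb => hxb (hAQ (Or.inr ⟨hxA, hb⟩)))⟩
    · obtain ⟨ρ, hρ⟩ := hP.exists_attachment x (hnontrivial hxA hx)
      exact ⟨ρ, fun a b hxa hxb =>
        hρ a b ((hQ_of_notMem hxA).1 hxa) fun h => hxb ((hQ_of_notMem hxA).2 h)⟩
  · intro ρ hρ
    by_cases hρr : ρ = r
    · subst hρr
      obtain ⟨z, hz⟩ : ∃ z, ∀ a ∈ A, Q a z := by
        rcases A.eq_empty_or_nonempty with rfl | ⟨z, hz⟩
        · exact ⟨ρ, fun _ h => h.elim⟩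
        · exact ⟨z, fun a ha => hAQ (Or.inr ⟨ha, hz⟩)⟩
      refine ⟨c, z, fun a ha haρ => ?_⟩
      by_cases haA : a ∈ A
      · exact Or.inr (hz a haA)
      · have haS : a ∈ S := by_contra fun haS =>
          hnontrivial haA ha (isSingletonClass_of_le_collapse hPS haS)
        exact Or.inl (hc a haS haρ ▸ Q.refl' a)
    · obtain ⟨y, z, hyz⟩ := hP.exists_pair_cover ρ (hρ.of_le hPQ)
      refine ⟨y, z, fun a ha haρ => ?_⟩
      have haA : a ∉ A := by
        intro haA
        by_cases hρA : ρ ∈ A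
        · exact ha (hρ.of_rel (hAQ (Or.inr ⟨haA, hρA⟩)))
        · exact hρr (hA a haA ρ hρA haρ)
      exact (hyz a (hnontrivial haA ha) haρ).imp (fun h => hPQ h) fun h => hPQ h

variable (G) in
def PendantMergeStep (P Q : Setoid V) : Prop :=
  MergeStep P Q ∧ G.IsPendantPartition Q

theorem reflTransGen_sup_collapse {P P' : Setoid V} {S A : Set V} {r c : V}
    (h : ReflTransGen G.PendantMergeStep P P') (hP' : P' ≤ collapse S) (hSA : Disjoint S A)
    (hA : ∀ a ∈ A, ∀ b ∉ A, G.Adj a b → b = r) (hc : ∀ a ∈ S, G.Adj a r → a = c) :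
    ReflTransGen G.PendantMergeStep (P ⊔ collapse A) (P' ⊔ collapse A) := by
  induction h with
  | refl => exact .refl
  | tail _ hstep ih =>
    exact (ih (hstep.1.le.trans hP')).tail
      ⟨hstep.1.sup_of_le_collapse hP' le_rfl hSA, hstep.2.sup_collapse hP' hSA hA hc⟩

theorem reflTransGen_collapse_union {S T : Set V} (hST : Disjoint S T)
    (h : G.IsPendantPartition (collapse (S ∪ T))) :
    ReflTransGen G.PendantMergeStep (collapse S ⊔ collapse T) (collapse (S ∪ T)) := by
  rcases S.eq_empty_or_nonempty with rfl | ⟨s, hs⟩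
  · rw [collapse_of_subsingleton Set.subsingleton_empty, bot_sup_eq, Set.empty_union]
  rcases T.eq_empty_or_nonempty with rfl | ⟨t, ht⟩
  · rw [collapse_of_subsingleton Set.subsingleton_empty, sup_bot_eq, Set.union_empty]
  exact .single ⟨mergeStep_collapse_union hST hs ht, h⟩

-- For `p` adjacent to `r` in a tree: the subtree at `r` when the tree is rooted beyond `p`.
variable (G) in
def branch (p r : V) : Set V :=
  {x | ∃ w : G.Walk r x, p ∉ w.support}

theorem mem_branch_self {p r : V} (h : p ≠ r) : r ∈ G.branch p r :=
  ⟨.nil, by simpa using h⟩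

theorem notMem_branch {p r : V} : p ∉ G.branch p r :=
  fun ⟨w, hw⟩ => hw w.end_mem_support

theorem mem_branch_of_mem_support {p r x y : V} {w : G.Walk r x} (hw : p ∉ w.support)
    (hy : y ∈ w.support) : y ∈ G.branch p r := by
  classical
  exact ⟨w.takeUntil y hy, fun h => hw (w.support_takeUntil_subset_support hy h)⟩

theorem eq_of_mem_branch_of_adj {p r a b : V} (ha : a ∈ G.branch p r) (hb : b ∉ G.branch p r)
    (hab : G.Adj a b) : b = p := by
  obtain ⟨w, hw⟩ := ha
  by_contra hbp
  exact hb ⟨w.concat hab, by simp [Walk.support_concat, hw, Ne.symm hbp]⟩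

theorem eq_of_mem_branch_of_adj_self (hG : G.IsAcyclic) {p r a : V} (hpr : G.Adj p r)
    (ha : a ∈ G.branch p r) (hap : G.Adj a p) : a = r := by
  obtain ⟨w, hw⟩ := ha
  have := isBridge_iff_forall_walk_mem_edges.1 (isAcyclic_iff_forall_adj_isBridge.1 hG hap.symm)
    (.cons hpr w)
  rcases List.mem_cons.1 (Walk.edges_cons hpr w ▸ this) with h | h
  · exact Sym2.congr_right.1 h
  · exact (hw (w.fst_mem_support_of_mem_edges h)).elim

theorem branch_subset_branch (hG : G.IsAcyclic) {p r c : V} (hpr : G.Adj p r)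
    (hrc : G.Adj r c) (hcp : c ≠ p) : G.branch r c ⊆ G.branch p r := by
  rintro x ⟨w, hw⟩
  refine ⟨.cons hrc w, ?_⟩
  rw [Walk.support_cons, List.mem_cons, not_or]
  exact ⟨hpr.ne, fun hp =>
    hcp (eq_of_mem_branch_of_adj_self hG hrc (mem_branch_of_mem_support hw hp) hpr).symm⟩

theorem exists_mem_branch_of_walk {r x : V} (w : G.Walk r x) (hx : x ≠ r) :
    ∃ c, G.Adj r c ∧ c ∈ w.support ∧ x ∈ G.branch r c := by
  classical
  have hpath := w.bypass_isPath
  have hsub := w.support_bypass_subset_support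
  generalize w.bypass = q at hpath hsub
  cases q with
  | nil => exact (hx rfl).elim
  | cons h q =>
    exact ⟨_, h, hsub (List.mem_cons_of_mem _ q.start_mem_support),
      q, (Walk.cons_isPath_iff h q).1 hpath |>.2⟩

theorem disjoint_branch (hG : G.IsAcyclic) {r c c' : V} (hc : G.Adj r c) (hc' : G.Adj r c')
    (hne : c ≠ c') : Disjoint (G.branch r c) (G.branch r c') := by
  refine Set.disjoint_left.2 fun x ⟨w, hw⟩ ⟨w', hw'⟩ => hne ?_
  refine (eq_of_mem_branch_of_adj_self hG hc ⟨w.append w'.reverse, ?_⟩ hc'.symm).symm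
  simp only [Walk.support_append, Walk.support_reverse, List.mem_append, not_or]
  exact ⟨hw, fun h => hw' (List.mem_reverse.1 (List.tail_subset _ h))⟩

theorem branch_eq_insert_iUnion (hG : G.IsAcyclic) {p r : V} (hpr : G.Adj p r) :
    G.branch p r = insert r (⋃ c ∈ G.neighborSet r \ {p}, G.branch r c) := by
  ext x
  simp only [Set.mem_insert_iff, Set.mem_iUnion, exists_prop, Set.mem_sdiff, mem_neighborSet,
    Set.mem_singleton_iff]
  constructor
  · rintro ⟨w, hw⟩
    rcases eq_or_ne x r with hx | hx
    · exact Or.inl hx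
    obtain ⟨c, hrc, hcw, hxc⟩ := exists_mem_branch_of_walk w hx
    exact Or.inr ⟨c, ⟨hrc, fun h => hw (h ▸ hcw)⟩, hxc⟩
  · rintro (rfl | ⟨c, ⟨hrc, hcp⟩, hx⟩)
    · exact mem_branch_self hpr.ne
    · exact branch_subset_branch hG hpr hrc hcp hx

theorem Connected.univ_eq_insert_iUnion_branch (hG : G.Connected) (r : V) :
    (Set.univ : Set V) = insert r (⋃ c ∈ G.neighborSet r, G.branch r c) := by
  refine (Set.eq_univ_of_forall fun x => ?_).symm
  rcases eq_or_ne x r with rfl | hx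
  · exact Set.mem_insert _ _
  obtain ⟨c, hrc, -, hxc⟩ := exists_mem_branch_of_walk (hG.preconnected r x).some hx
  exact Set.mem_insert_of_mem _ (Set.mem_biUnion hrc hxc)

theorem eq_of_mem_iUnion_branch_of_adj {r a b : V} {C : Set V}
    (ha : a ∈ ⋃ c ∈ C, G.branch r c) (hb : b ∉ ⋃ c ∈ C, G.branch r c) (hab : G.Adj a b) :
    b = r := by
  obtain ⟨c, hc, hac⟩ := Set.mem_iUnion₂.1 ha
  exact eq_of_mem_branch_of_adj hac (fun h => hb (Set.mem_biUnion hc h)) hab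

theorem reflTransGen_collapse_iUnion_branch [Finite V] (hG : G.IsAcyclic) {r : V} {C : Set V}
    (hC : C ⊆ G.neighborSet r)
    (ih : ∀ c ∈ C, ReflTransGen G.PendantMergeStep ⊥ (collapse (G.branch r c))) :
    ReflTransGen G.PendantMergeStep ⊥ (collapse (⋃ c ∈ C, G.branch r c)) := by
  refine Set.Finite.induction_on_subset
    (motive := fun D _ => ReflTransGen G.PendantMergeStep ⊥ (collapse (⋃ c ∈ D, G.branch r c)))
    C C.toFinite ?_ ?_
  · rw [Set.biUnion_empty, collapse_of_subsingleton Set.subsingleton_empty]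
  intro c D hcC hDC hcD hD
  set A := ⋃ c' ∈ D, G.branch r c'
  have hrc : G.Adj r c := hC hcC
  have hdisj : Disjoint (G.branch r c) A := Set.disjoint_iUnion₂_right.2 fun c' hc' =>
    disjoint_branch hG hrc (hC (hDC hc')) fun h => hcD (h ▸ hc')
  have hpendant : ∀ a ∈ G.branch r c ∪ A, ∀ b ∉ G.branch r c ∪ A, G.Adj a b → b = r := by
    rw [← Set.biUnion_insert]
    exact fun a ha b hb => eq_of_mem_iUnion_branch_of_adj ha hb
  have hchild := reflTransGen_sup_collapse (ih c hcC) le_rfl hdisj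
    (fun a ha b hb => eq_of_mem_iUnion_branch_of_adj ha hb)
    (fun a ha har => eq_of_mem_branch_of_adj_self hG hrc ha har)
  rw [bot_sup_eq] at hchild
  rw [Set.biUnion_insert]
  exact hD.trans (hchild.trans
    (reflTransGen_collapse_union hdisj (isPendantPartition_collapse hpendant)))

theorem reflTransGen_collapse_insert_iUnion_branch [Finite V] (hG : G.IsAcyclic) {r ρ : V}
    {C : Set V} (hC : C ⊆ G.neighborSet r)
    (ih : ∀ c ∈ C, ReflTransGen G.PendantMergeStep ⊥ (collapse (G.branch r c)))
    (hρ : ∀ a ∈ insert r (⋃ c ∈ C, G.branch r c), ∀ b ∉ insert r (⋃ c ∈ C, G.branch r c),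
      G.Adj a b → b = ρ) :
    ReflTransGen G.PendantMergeStep ⊥ (collapse (insert r (⋃ c ∈ C, G.branch r c))) := by
  have hr : Disjoint (⋃ c ∈ C, G.branch r c) {r} :=
    Set.disjoint_singleton_right.2 (by simp [notMem_branch])
  rw [Set.insert_eq, Set.union_comm] at hρ ⊢
  have hstep := reflTransGen_collapse_union hr (isPendantPartition_collapse hρ)
  rw [collapse_of_subsingleton Set.subsingleton_singleton, sup_bot_eq] at hstep
  exact (reflTransGen_collapse_iUnion_branch hG hC ih).trans hstep

theorem reflTransGen_collapse_branch [Finite V] (hG : G.IsAcyclic) {p r : V}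
    (hpr : G.Adj p r) : ReflTransGen G.PendantMergeStep ⊥ (collapse (G.branch p r)) := by
  induction hn : (G.branch p r).ncard using Nat.strong_induction_on generalizing p r with
  | _ n ih =>
  have hbranch := branch_eq_insert_iUnion hG hpr
  rw [hbranch]
  refine reflTransGen_collapse_insert_iUnion_branch (ρ := p) hG Set.sdiff_subset
    (fun c hc => ?_) ?_
  · have hsub : G.branch r c ⊂ G.branch p r :=
      (Set.ssubset_iff_of_subset (branch_subset_branch hG hpr hc.1 hc.2)).2
        ⟨r, mem_branch_self hpr.ne, notMem_branch⟩
    exact ih _ (hn ▸ Set.ncard_lt_ncard hsub) hc.1 rfl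
  · rw [← hbranch]
    exact fun a ha b hb => eq_of_mem_branch_of_adj ha hb

end SimpleGraph

theorem tree_tww_le_two {V : Type} [Fintype V] (G : SimpleGraph V) (hT : G.IsTree) :
    (Trigraph.ofGraph G).tww ≤ 2 := by
  obtain ⟨r⟩ := hT.connected.nonempty
  have huniv := hT.connected.univ_eq_insert_iUnion_branch r
  have htop := SimpleGraph.reflTransGen_collapse_insert_iUnion_branch hT.isAcyclic (ρ := r)
    subset_rfl (fun _ hc => SimpleGraph.reflTransGen_collapse_branch hT.isAcyclic hc)
    (fun _ _ b hb => (hb (huniv ▸ Set.mem_univ b)).elim)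
  rw [← huniv, Setoid.collapse_univ] at htop
  exact Nat.sInf_le (Trigraph.hasSeq_of_reflTransGen (fun _ h => h.redDegLE)
    SimpleGraph.isPendantPartition_bot htop)
end

section
/- Let G be a trigraph containing a fence gadget F (with bipartition (A, B)) attached to a set S and satisfying the attachment rule in G. Consider a partial contraction sequence from G and its first contraction that involves a pair of vertices of V(F) (so before this contraction every vertex of V(F) lies in its own part, no part containing two vertices of V(F)). If the two involved vertices of V(F) both lie in A or both lie in B, then the vertex created by this contraction has red degree at least 5. -/
open Trigraph

/-- The 12 vertices of a fence gadget with sides `a` (for `A = {a_1, …, a_6}`)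
and `b` (for `B = {b_1, …, b_6}`), indexed by `Fin 6` (so `a 0` is `a_1`, …). -/
def fenceSet {V : Type} (a b : Fin 6 → V) : Set V := Set.range a ∪ Set.range b

/-- The fence gadget with sides `a`, `b` is attached to the set `S` in the trigraph
`G` and satisfies the attachment rule there, with associated set `X`.
Its black edges are the two 6-cycles on `A` and on `B` together with the edge
`b_1 a_6`; its red edges are `a_i b_i` (`i ∈ [6]`) and `a_i b_{i+1}` (`i ∈ [5]`);
the 12 fence vertices form a connected component of the red graph of `G`; every
vertex of `A` has (black) neighborhood `X ∪ S` outside the fence, every vertex of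
`B` has (black) neighborhood `X` outside the fence, and every vertex of `X` is
(black-)adjacent to all of `S`. -/
structure FenceAttached {V : Type} (G : Trigraph V) (a b : Fin 6 → V)
    (S X : Set V) : Prop where
  a_inj : Function.Injective a
  b_inj : Function.Injective b
  ab_ne : ∀ i j : Fin 6, a i ≠ b j
  S_nonempty : S.Nonempty
  S_disj : ∀ z ∈ S, z ∉ fenceSet a b
  X_disj : ∀ z ∈ X, z ∉ fenceSet a b ∪ S
  black_aa : ∀ i j : Fin 6, G.black.Adj (a i) (a j) ↔ (j = i + 1 ∨ i = j + 1)
  black_bb : ∀ i j : Fin 6, G.black.Adj (b i) (b j) ↔ (j = i + 1 ∨ i = j + 1)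
  black_ab : ∀ i j : Fin 6, G.black.Adj (a i) (b j) ↔ (i = 5 ∧ j = 0)
  red_aa : ∀ i j : Fin 6, ¬ G.red.Adj (a i) (a j)
  red_bb : ∀ i j : Fin 6, ¬ G.red.Adj (b i) (b j)
  red_ab : ∀ i j : Fin 6, G.red.Adj (a i) (b j) ↔ (j = i ∨ (j : ℕ) = (i : ℕ) + 1)
  red_closed : ∀ x ∈ fenceSet a b, ∀ y : V, G.red.Adj x y → y ∈ fenceSet a b
  black_a_out : ∀ (i : Fin 6) (z : V), z ∉ fenceSet a b →
      (G.black.Adj (a i) z ↔ z ∈ X ∪ S)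
  black_b_out : ∀ (i : Fin 6) (z : V), z ∉ fenceSet a b →
      (G.black.Adj (b i) z ↔ z ∈ X)
  X_black_S : ∀ x ∈ X, ∀ z ∈ S, G.black.Adj x z

/-!
A fence vertex `w` other than the merged vertices `u`, `v` that is adjacent to `u` or to `v`,
but not black-adjacent to both, becomes a red neighbour of the contracted vertex.
Since no part contains two fence vertices, distinct such `w` give distinct red neighbours, and
a finite check on the twelve vertices of the gadget shows that every pair of distinct vertices
on the same side has at least five such `w`.
-/

namespace Trigraph

variable {V : Type}

lemma quot_mergeSetoid_red_adj (G : Trigraph V) (P : Setoid V) {u v z : V}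
    (hz : ¬ (mergeSetoid P u v).r u z) (hadj : G.TotAdj u z ∨ G.TotAdj v z)
    (hblack : ¬ (G.black.Adj u z ∧ G.black.Adj v z)) :
    (G.quot (mergeSetoid P u v)).red.Adj (Quotient.mk _ u) (Quotient.mk _ z) := by
  have hvu : Quotient.mk (mergeSetoid P u v) v = Quotient.mk _ u :=
    Quotient.sound (Or.inr (Or.inr ⟨P.iseqv.refl v, P.iseqv.refl u⟩))
  refine ⟨fun h => hz (Quotient.exact h),
    fun hall => hblack ⟨hall u z rfl rfl, hall v z hvu rfl⟩, ?_⟩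
  rcases hadj with h | h
  · exact ⟨u, z, rfl, rfl, h⟩
  · exact ⟨v, z, hvu, rfl, h⟩

lemma eq_or_eq_of_mergeSetoid_rel {P : Setoid V} {F : Set V}
    (hsep : ∀ x ∈ F, ∀ y ∈ F, P.r x y → x = y) {u v z w : V}
    (hu : u ∈ F) (hv : v ∈ F) (hz : z ∈ F) (hw : w ∈ F) (h : (mergeSetoid P u v).r z w) :
    z = w ∨ (z = u ∧ w = v) ∨ (z = v ∧ w = u) := by
  rcases h with h | ⟨hzu, hvw⟩ | ⟨hzv, huw⟩
  · exact Or.inl (hsep z hz w hw h)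
  · exact Or.inr (Or.inl ⟨hsep z hz u hu hzu, (hsep v hv w hw hvw).symm⟩)
  · exact Or.inr (Or.inr ⟨hsep z hz v hv hzv, (hsep u hu w hw huw).symm⟩)

end Trigraph

/-- Black adjacency of the fence gadget, on `A ⊕ B` indexed by `Fin 6 ⊕ Fin 6`. -/
def fenceBlack : Fin 6 ⊕ Fin 6 → Fin 6 ⊕ Fin 6 → Bool
  | .inl i, .inl j => decide (j = i + 1 ∨ i = j + 1)
  | .inl i, .inr j => decide (i = 5 ∧ j = 0)
  | .inr i, .inl j => decide (j = 5 ∧ i = 0)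
  | .inr i, .inr j => decide (j = i + 1 ∨ i = j + 1)

def fenceRed : Fin 6 ⊕ Fin 6 → Fin 6 ⊕ Fin 6 → Bool
  | .inl i, .inr j => decide (j = i ∨ (j : ℕ) = (i : ℕ) + 1)
  | .inr i, .inl j => decide (i = j ∨ (i : ℕ) = (j : ℕ) + 1)
  | _, _ => false

def fenceAdj (k l : Fin 6 ⊕ Fin 6) : Bool := fenceBlack k l || fenceRed k l

def fenceMergeRedNbrs (u v : Fin 6 ⊕ Fin 6) : Finset (Fin 6 ⊕ Fin 6) :=
  Finset.univ.filter fun w => w ≠ u ∧ w ≠ v ∧ (fenceAdj u w ∨ fenceAdj v w) ∧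
    ¬ (fenceBlack u w ∧ fenceBlack v w)

lemma mem_fenceMergeRedNbrs {u v w : Fin 6 ⊕ Fin 6} :
    w ∈ fenceMergeRedNbrs u v ↔ w ≠ u ∧ w ≠ v ∧ (fenceAdj u w ∨ fenceAdj v w) ∧
      ¬ (fenceBlack u w ∧ fenceBlack v w) := by
  simp [fenceMergeRedNbrs]

lemma five_le_card_fenceMergeRedNbrs :
    ∀ u v : Fin 6 ⊕ Fin 6, u ≠ v → u.isLeft = v.isLeft → 5 ≤ (fenceMergeRedNbrs u v).card := by
  decide

lemma sumElim_mem_fenceSet {V : Type} (a b : Fin 6 → V) :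
    ∀ k, Sum.elim a b k ∈ fenceSet a b
  | .inl i => Or.inl ⟨i, rfl⟩
  | .inr i => Or.inr ⟨i, rfl⟩

namespace FenceAttached

variable {V : Type} {G : Trigraph V} {a b : Fin 6 → V} {S X : Set V}

lemma injective_sumElim (hF : FenceAttached G a b S X) : Function.Injective (Sum.elim a b)
  | .inl _, .inl _, h => congrArg Sum.inl (hF.a_inj h)
  | .inl i, .inr j, h => absurd h (hF.ab_ne i j)
  | .inr i, .inl j, h => absurd h.symm (hF.ab_ne j i)
  | .inr _, .inr _, h => congrArg Sum.inr (hF.b_inj h)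

lemma black_adj_sumElim (hF : FenceAttached G a b S X) :
    ∀ k l, G.black.Adj (Sum.elim a b k) (Sum.elim a b l) ↔ fenceBlack k l
  | .inl i, .inl j => by simpa [fenceBlack] using hF.black_aa i j
  | .inl i, .inr j => by simpa [fenceBlack] using hF.black_ab i j
  | .inr i, .inl j => by simpa [fenceBlack, G.black.adj_comm] using hF.black_ab j i
  | .inr i, .inr j => by simpa [fenceBlack] using hF.black_bb i j

lemma red_adj_sumElim (hF : FenceAttached G a b S X) :
    ∀ k l, G.red.Adj (Sum.elim a b k) (Sum.elim a b l) ↔ fenceRed k l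
  | .inl i, .inl j => by simpa [fenceRed] using hF.red_aa i j
  | .inl i, .inr j => by simpa [fenceRed] using hF.red_ab i j
  | .inr i, .inl j => by simpa [fenceRed, G.red.adj_comm] using hF.red_ab j i
  | .inr i, .inr j => by simpa [fenceRed] using hF.red_bb i j

lemma totAdj_sumElim (hF : FenceAttached G a b S X) (k l : Fin 6 ⊕ Fin 6) :
    G.TotAdj (Sum.elim a b k) (Sum.elim a b l) ↔ fenceAdj k l := by
  simp [Trigraph.TotAdj, fenceAdj, hF.black_adj_sumElim, hF.red_adj_sumElim]

lemma mergeSetoid_rel_sumElim (hF : FenceAttached G a b S X) {P : Setoid V}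
    (hsep : ∀ x ∈ fenceSet a b, ∀ y ∈ fenceSet a b, P.r x y → x = y) {u v k l : Fin 6 ⊕ Fin 6}
    (h : (Trigraph.mergeSetoid P (Sum.elim a b u) (Sum.elim a b v)).r
      (Sum.elim a b k) (Sum.elim a b l)) :
    k = l ∨ (k = u ∧ l = v) ∨ (k = v ∧ l = u) := by
  simpa only [hF.injective_sumElim.eq_iff] using
    Trigraph.eq_or_eq_of_mergeSetoid_rel hsep (sumElim_mem_fenceSet a b u)
      (sumElim_mem_fenceSet a b v) (sumElim_mem_fenceSet a b k) (sumElim_mem_fenceSet a b l) h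

end FenceAttached

theorem fence_same_side_contraction_red_degree_ge_five_general {V : Type} [Fintype V]
    (G : Trigraph V) (a b : Fin 6 → V) (S X : Set V)
    (hF : FenceAttached G a b S X)
    (P : Setoid V)
    -- before this contraction, no part contains two vertices of `V(F)`
    (hsep : ∀ x ∈ fenceSet a b, ∀ y ∈ fenceSet a b, P.r x y → x = y)
    (x y : V)
    -- the contraction involves the pair `x, y`, both in `A` or both in `B`
    (hxy : (∃ i j : Fin 6, i ≠ j ∧ x = a i ∧ y = a j) ∨
           (∃ i j : Fin 6, i ≠ j ∧ x = b i ∧ y = b j)) :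
    5 ≤ (((G.quot (Trigraph.mergeSetoid P x y)).red.neighborSet
        (Quotient.mk (Trigraph.mergeSetoid P x y) x)).ncard) := by
  obtain ⟨u, v, huv, hside, rfl, rfl⟩ : ∃ u v : Fin 6 ⊕ Fin 6, u ≠ v ∧
      u.isLeft = v.isLeft ∧ x = Sum.elim a b u ∧ y = Sum.elim a b v := by
    rcases hxy with ⟨i, j, hij, rfl, rfl⟩ | ⟨i, j, hij, rfl, rfl⟩
    · exact ⟨.inl i, .inl j, by simpa using hij, rfl, rfl, rfl⟩
    · exact ⟨.inr i, .inr j, by simpa using hij, rfl, rfl, rfl⟩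
  calc 5 ≤ (fenceMergeRedNbrs u v).card := five_le_card_fenceMergeRedNbrs u v huv hside
    _ = (↑(fenceMergeRedNbrs u v) : Set (Fin 6 ⊕ Fin 6)).ncard := (Set.ncard_coe_finset _).symm
    _ ≤ _ := by
      refine Set.ncard_le_ncard_of_injOn (fun k => Quotient.mk _ (Sum.elim a b k))
        (fun k hk => ?_) (fun k hk l _ h => ?_)
      all_goals obtain ⟨hku, hkv, hadj, hblack⟩ := mem_fenceMergeRedNbrs.1 hk
      · refine Trigraph.quot_mergeSetoid_red_adj G P (fun h => ?_) ?_ ?_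
        · rcases hF.mergeSetoid_rel_sumElim hsep h with h | ⟨-, h⟩ | ⟨h, -⟩
          exacts [hku h.symm, hkv h, huv h]
        · simpa only [hF.totAdj_sumElim] using hadj
        · simpa only [hF.black_adj_sumElim] using hblack
      · rcases hF.mergeSetoid_rel_sumElim hsep (Quotient.exact h) with h | ⟨h, -⟩ | ⟨h, -⟩
        exacts [h, absurd h hku, absurd h hkv]

theorem fence_same_side_contraction_red_degree_ge_five {V : Type} [Fintype V]
    (G : Trigraph V) (a b : Fin 6 → V) (S X : Set V)
    (hF : FenceAttached G a b S X)
    (L : List (Setoid V)) (P : Setoid V)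
    (hL : Trigraph.IsPartialContractionSeq L) (hP : L.getLast? = some P)
    -- before this contraction, no part contains two vertices of `V(F)`
    (hsep : ∀ x ∈ fenceSet a b, ∀ y ∈ fenceSet a b, P.r x y → x = y)
    (x y : V) (hne : ¬ P.r x y)
    -- the contraction involves the pair `x, y`, both in `A` or both in `B`
    (hxy : (∃ i j : Fin 6, i ≠ j ∧ x = a i ∧ y = a j) ∨
           (∃ i j : Fin 6, i ≠ j ∧ x = b i ∧ y = b j)) :
    5 ≤ (((G.quot (Trigraph.mergeSetoid P x y)).red.neighborSet
        (Quotient.mk (Trigraph.mergeSetoid P x y) x)).ncard) :=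
  fence_same_side_contraction_red_degree_ge_five_general G a b S X hF P hsep x y hxy
end

section
/- Let G be a trigraph containing a fence gadget F (with bipartition (A, B)) attached to a set S and satisfying the attachment rule in G, with associated sets X and Y = V(G) \ (V(F) ∪ S ∪ X). In any partial 4-sequence from G, as long as no part contains two vertices of V(F), the following hold in every trigraph of the sequence: no part intersects both X and S, no part intersects both Y and S, and no part intersects both X and Y. -/
open Trigraph

/-!
A vertex `c` that is black-adjacent to `p` but not adjacent to `q` forces a red edge between
its part and any part containing both `p` and `q`. Inside the gadget, every vertex of `B` is
black-adjacent to all of `X` and non-adjacent to everything outside `V(F) ∪ X`, and every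
vertex of `A` is black-adjacent to all of `S` and non-adjacent to `Y`. Since the six vertices
of `B` (or of `A`) lie in six distinct parts, a part mixing `X` with `S` or `Y` (resp. `S`
with `Y`) would have at least five red neighbours.
-/

namespace Trigraph

variable {V : Type}

theorem quot_red_adj_of_black_of_not_totAdj (G : Trigraph V) (P : Setoid V) {c p q : V}
    (hpq : P.r p q) (hcp : G.black.Adj c p) (hcq : ¬ G.TotAdj c q)
    (hne : Quotient.mk P c ≠ Quotient.mk P p) :
    (G.quot P).red.Adj (Quotient.mk P p) (Quotient.mk P c) :=
  SimpleGraph.Adj.symm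
    ⟨hne, fun h => hcq (Or.inl (h c q rfl (Quotient.sound (P.iseqv.symm hpq)))),
      c, p, rfl, rfl, Or.inl hcp⟩

theorem card_le_ncard_quot_red_neighborSet_add_one [Finite V] {ι : Type*} (G : Trigraph V)
    (P : Setoid V) (c : ι → V) (hc : Function.Injective fun i => Quotient.mk P (c i))
    {p q : V} (hpq : P.r p q) (hcp : ∀ i, G.black.Adj (c i) p)
    (hcq : ∀ i, ¬ G.TotAdj (c i) q) :
    Nat.card ι ≤ ((G.quot P).red.neighborSet (Quotient.mk P p)).ncard + 1 := by
  have hrange : Set.range (fun i => Quotient.mk P (c i)) ⊆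
      insert (Quotient.mk P p) ((G.quot P).red.neighborSet (Quotient.mk P p)) := by
    rintro _ ⟨i, rfl⟩
    by_cases h : Quotient.mk P (c i) = Quotient.mk P p
    · exact Or.inl h
    · exact Or.inr (G.quot_red_adj_of_black_of_not_totAdj P hpq (hcp i) (hcq i) h)
  calc Nat.card ι = (Set.range fun i => Quotient.mk P (c i)).ncard :=
        (Set.ncard_range_of_injective hc).symm
    _ ≤ _ := Set.ncard_le_ncard hrange
    _ ≤ _ := Set.ncard_insert_le _ _

theorem not_rel_of_black_of_not_totAdj [Finite V] {ι : Type*} (G : Trigraph V)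
    (P : Setoid V) {d : ℕ} (hdeg : (G.quot P).RedDegLE d) (c : ι → V)
    (hc : Function.Injective fun i => Quotient.mk P (c i)) (hcard : d + 1 < Nat.card ι)
    {p q : V} (hcp : ∀ i, G.black.Adj (c i) p) (hcq : ∀ i, ¬ G.TotAdj (c i) q) :
    ¬ P.r p q := fun hpq => by
  have := G.card_le_ncard_quot_red_neighborSet_add_one P c hc hpq hcp hcq
  have := hdeg (Quotient.mk P p)
  omega

end Trigraph

namespace FenceAttached

variable {V : Type} {G : Trigraph V} {a b : Fin 6 → V} {S X : Set V}

theorem a_mem_fenceSet (i : Fin 6) : a i ∈ fenceSet a b := Or.inl ⟨i, rfl⟩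

theorem b_mem_fenceSet (i : Fin 6) : b i ∈ fenceSet a b := Or.inr ⟨i, rfl⟩

theorem totAdj_a_iff (hF : FenceAttached G a b S X) (i : Fin 6) {z : V}
    (hz : z ∉ fenceSet a b) : G.TotAdj (a i) z ↔ z ∈ X ∪ S :=
  ⟨fun h => h.elim (hF.black_a_out i z hz).1
      fun h => absurd (hF.red_closed _ (a_mem_fenceSet i) z h) hz,
    fun h => Or.inl ((hF.black_a_out i z hz).2 h)⟩

theorem totAdj_b_iff (hF : FenceAttached G a b S X) (i : Fin 6) {z : V}
    (hz : z ∉ fenceSet a b) : G.TotAdj (b i) z ↔ z ∈ X :=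
  ⟨fun h => h.elim (hF.black_b_out i z hz).1
      fun h => absurd (hF.red_closed _ (b_mem_fenceSet i) z h) hz,
    fun h => Or.inl ((hF.black_b_out i z hz).2 h)⟩

theorem injective_mk_a (hF : FenceAttached G a b S X) {P : Setoid V}
    (hsep : ∀ x ∈ fenceSet a b, ∀ y ∈ fenceSet a b, P.r x y → x = y) :
    Function.Injective fun i => Quotient.mk P (a i) := fun i j h =>
  hF.a_inj (hsep _ (a_mem_fenceSet i) _ (a_mem_fenceSet j) (Quotient.exact h))

theorem injective_mk_b (hF : FenceAttached G a b S X) {P : Setoid V}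
    (hsep : ∀ x ∈ fenceSet a b, ∀ y ∈ fenceSet a b, P.r x y → x = y) :
    Function.Injective fun i => Quotient.mk P (b i) := fun i j h =>
  hF.b_inj (hsep _ (b_mem_fenceSet i) _ (b_mem_fenceSet j) (Quotient.exact h))

end FenceAttached

theorem fence_no_part_mixing_X_S_Y {V : Type} [Fintype V]
    (G : Trigraph V) (a b : Fin 6 → V) (S X : Set V)
    (hF : FenceAttached G a b S X)
    (L : List (Setoid V)) (hL : G.IsPartialSeq 4 L)
    (P : Setoid V) (hP : P ∈ L)
    -- as long as no part contains two vertices of `V(F)`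
    (hsep : ∀ x ∈ fenceSet a b, ∀ y ∈ fenceSet a b, P.r x y → x = y) :
    -- no part intersects both `X` and `S`
    (∀ x ∈ X, ∀ z ∈ S, ¬ P.r x z) ∧
    -- no part intersects both `Y` and `S`
    (∀ y ∈ (Set.univ \ (fenceSet a b ∪ S ∪ X) : Set V), ∀ z ∈ S, ¬ P.r y z) ∧
    -- no part intersects both `X` and `Y`
    (∀ x ∈ X, ∀ y ∈ (Set.univ \ (fenceSet a b ∪ S ∪ X) : Set V), ¬ P.r x y) := by
  have hdeg := hL.2 P hP
  have h6 : 4 + 1 < Nat.card (Fin 6) := by simp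
  have no_rel_b : ∀ {p q}, (∀ i, G.black.Adj (b i) p) → (∀ i, ¬ G.TotAdj (b i) q) →
      ¬ P.r p q := G.not_rel_of_black_of_not_totAdj P hdeg b (hF.injective_mk_b hsep) h6
  have no_rel_a : ∀ {p q}, (∀ i, G.black.Adj (a i) p) → (∀ i, ¬ G.TotAdj (a i) q) →
      ¬ P.r p q := G.not_rel_of_black_of_not_totAdj P hdeg a (hF.injective_mk_a hsep) h6
  have hXF : ∀ x ∈ X, x ∉ fenceSet a b := fun x hx h => hF.X_disj x hx (Or.inl h)
  have hSX : ∀ z ∈ S, z ∉ X := fun z hz h => hF.X_disj z h (Or.inr hz)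
  have black_b_X : ∀ x ∈ X, ∀ i, G.black.Adj (b i) x := fun x hx i =>
    (hF.black_b_out i x (hXF x hx)).2 hx
  have mem_Y : ∀ {y}, y ∈ (Set.univ \ (fenceSet a b ∪ S ∪ X) : Set V) →
      y ∉ fenceSet a b ∧ y ∉ X ∪ S := by
    intro y hy
    simp only [Set.mem_sdiff, Set.mem_univ, Set.mem_union, true_and, not_or] at hy ⊢
    tauto
  refine ⟨fun x hx z hz => ?_, fun y hy z hz => ?_, fun x hx y hy => ?_⟩
  · exact no_rel_b (black_b_X x hx) fun i h =>
      hSX z hz ((hF.totAdj_b_iff i (hF.S_disj z hz)).1 h)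
  · exact fun hyz => no_rel_a (fun i => (hF.black_a_out i z (hF.S_disj z hz)).2 (Or.inr hz))
      (fun i h => (mem_Y hy).2 ((hF.totAdj_a_iff i (mem_Y hy).1).1 h)) (P.iseqv.symm hyz)
  · exact no_rel_b (black_b_X x hx) fun i h =>
      (mem_Y hy).2 (Or.inl ((hF.totAdj_b_iff i (mem_Y hy).1).1 h))
end

section
/- Let G be a trigraph containing a fence gadget F (with bipartition (A, B)) attached to a set S and satisfying the attachment rule in G. In any partial 4-sequence from G, the first contraction that involves a pair of vertices consisting of a vertex of V(F) and a vertex of V(F) ∪ S can only occur at a moment when S is contained in a single part (i.e., S has already been contracted into a single vertex). -/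
open Trigraph

/-! Suppose two vertices `z`, `z'` of `S` lie in different parts, and the contraction merges the
parts of `f ∈ V(F)` and `g ∈ V(F) ∪ S`. Since no earlier contraction involved two vertices of
`V(F) ∪ S`, the other fence vertices, and `z`, `z'` when `g ∈ V(F)`, lie in pairwise distinct parts,
all different from the merged one. Whether such a part is joined to the merged part by a red edge is
determined by the gadget and the attachment rule, and a finite check shows that for every choice of
`f` and `g` at least five of them are, so the red degree exceeds `4`. -/

namespace Trigraph

variable {V : Type}

theorem mergeSetoid_comm (P : Setoid V) (u v : V) : mergeSetoid P u v = mergeSetoid P v u := by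
  ext x y
  change _ ∨ _ ∨ _ ↔ _ ∨ _ ∨ _
  tauto

theorem mergeSetoid_congr {P : Setoid V} {u u' v v' : V} (hu : P.r u u') (hv : P.r v v') :
    mergeSetoid P u v = mergeSetoid P u' v' := by
  ext x y
  change _ ∨ _ ∨ _ ↔ _ ∨ _ ∨ _
  constructor
  · rintro (h | ⟨h₁, h₂⟩ | ⟨h₁, h₂⟩)
    · exact Or.inl h
    · exact Or.inr (Or.inl ⟨P.trans h₁ hu, P.trans (P.symm hv) h₂⟩)
    · exact Or.inr (Or.inr ⟨P.trans h₁ hv, P.trans (P.symm hu) h₂⟩)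
  · rintro (h | ⟨h₁, h₂⟩ | ⟨h₁, h₂⟩)
    · exact Or.inl h
    · exact Or.inr (Or.inl ⟨P.trans h₁ (P.symm hu), P.trans hv h₂⟩)
    · exact Or.inr (Or.inr ⟨P.trans h₁ (P.symm hv), P.trans hu h₂⟩)

theorem quot_red_adj {G : Trigraph V} {Q : Setoid V} {x y : V} (hxy : ¬ Q.r x y)
    (htot : ∃ x₁, Q.r x₁ x ∧ G.TotAdj x₁ y) (hblack : ∃ x₂, Q.r x₂ x ∧ ¬ G.black.Adj x₂ y) :
    (G.quot Q).red.Adj (Quotient.mk Q x) (Quotient.mk Q y) :=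
  let ⟨x₁, h₁, ht⟩ := htot
  let ⟨x₂, h₂, hb⟩ := hblack
  ⟨fun h => hxy (Quotient.exact h), fun hall => hb (hall x₂ y (Quotient.sound h₂) rfl),
    x₁, y, Quotient.sound h₁, rfl, ht⟩

theorem card_le_ncard_red_neighborSet_quot [Finite V] {α : Type*} {G : Trigraph V}
    {Q : Setoid V} {x : V} {ι : α → V} {s : Finset α}
    (hι : ∀ i ∈ s, ∀ j ∈ s, Q.r (ι i) (ι j) → i = j)
    (hred : ∀ i ∈ s, (G.quot Q).red.Adj (Quotient.mk Q x) (Quotient.mk Q (ι i))) :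
    s.card ≤ ((G.quot Q).red.neighborSet (Quotient.mk Q x)).ncard := by
  have hinj : Set.InjOn (fun i => Quotient.mk Q (ι i)) s :=
    fun i hi j hj h => hι i hi j hj (Quotient.exact h)
  calc s.card = ((fun i => Quotient.mk Q (ι i)) '' s).ncard := by
        rw [hinj.ncard_image, Set.ncard_coe_finset]
    _ ≤ _ := Set.ncard_le_ncard (by rintro _ ⟨i, hi, rfl⟩; exact hred i hi) (Set.toFinite _)

end Trigraph

/-- The fence gadget together with two vertices of `S`: `inl (inl i)` is `a i`, `inl (inr i)` is
`b i`, and `inr false`, `inr true` are the two vertices of `S`. -/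
abbrev FenceModel := (Fin 6 ⊕ Fin 6) ⊕ Bool

namespace FenceModel

def black : FenceModel → FenceModel → Bool
  | .inl (.inl i), .inl (.inl j) => decide (j = i + 1 ∨ i = j + 1)
  | .inl (.inr i), .inl (.inr j) => decide (j = i + 1 ∨ i = j + 1)
  | .inl (.inl i), .inl (.inr j) => decide (i = 5 ∧ j = 0)
  | .inl (.inr j), .inl (.inl i) => decide (i = 5 ∧ j = 0)
  | .inl (.inl _), .inr _ => true
  | .inr _, .inl (.inl _) => true
  | _, _ => false

def red : FenceModel → FenceModel → Bool
  | .inl (.inl i), .inl (.inr j) => decide (j = i ∨ (j : ℕ) = i + 1)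
  | .inl (.inr j), .inl (.inl i) => decide (j = i ∨ (j : ℕ) = i + 1)
  | _, _ => false

def tot (m m' : FenceModel) : Bool := black m m' || red m m'

def seesMergedRed (m m' w : FenceModel) : Bool :=
  (tot m w || tot m' w) && (!black m w || !black m' w)

/-- Pairs of vertices of `S` are excluded: the gadget does not determine their adjacency. -/
def witnesses (m m' : FenceModel) : Finset FenceModel :=
  Finset.univ.filter fun w => w ≠ m ∧ w ≠ m' ∧ (m'.isLeft ∨ w.isLeft) ∧ seesMergedRed m m' w

theorem five_le_card_witnesses :
    ∀ c : Fin 6 ⊕ Fin 6, ∀ m : FenceModel, m ≠ .inl c → 5 ≤ (witnesses (.inl c) m).card := by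
  decide

variable {V : Type}

def embed (a b : Fin 6 → V) (z z' : V) : FenceModel → V :=
  Sum.elim (Sum.elim a b) fun t => cond t z' z

@[simp] theorem embed_inl_inl (a b : Fin 6 → V) (z z' : V) (i : Fin 6) :
    embed a b z z' (.inl (.inl i)) = a i := rfl

@[simp] theorem embed_inl_inr (a b : Fin 6 → V) (z z' : V) (i : Fin 6) :
    embed a b z z' (.inl (.inr i)) = b i := rfl

variable {a b : Fin 6 → V} {S : Set V} {z z' : V}

theorem embed_inl_mem (c : Fin 6 ⊕ Fin 6) : embed a b z z' (.inl c) ∈ fenceSet a b := by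
  rcases c with i | i
  exacts [Or.inl ⟨i, rfl⟩, Or.inr ⟨i, rfl⟩]

theorem exists_embed_inl_eq {f : V} (hf : f ∈ fenceSet a b) :
    ∃ c, embed a b z z' (.inl c) = f := by
  rcases hf with ⟨i, rfl⟩ | ⟨i, rfl⟩
  exacts [⟨.inl i, rfl⟩, ⟨.inr i, rfl⟩]

theorem embed_inr_mem (hz : z ∈ S) (hz' : z' ∈ S) (t : Bool) : embed a b z z' (.inr t) ∈ S := by
  cases t
  exacts [hz, hz']

theorem embed_mem (hz : z ∈ S) (hz' : z' ∈ S) (m : FenceModel) :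
    embed a b z z' m ∈ fenceSet a b ∪ S := by
  rcases m with c | t
  exacts [Or.inl (embed_inl_mem c), Or.inr (embed_inr_mem hz hz' t)]

end FenceModel

open FenceModel (embed embed_inl_mem embed_inr_mem embed_mem exists_embed_inl_eq)

namespace FenceAttached

variable {V : Type} {G : Trigraph V} {a b : Fin 6 → V} {S X : Set V} {z z' : V}

theorem black_adj_a_of_mem (hF : FenceAttached G a b S X) (i : Fin 6) {s : V} (hs : s ∈ S) :
    G.black.Adj (a i) s :=
  (hF.black_a_out i s (hF.S_disj s hs)).mpr (Or.inr hs)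

theorem not_black_adj_b_of_mem (hF : FenceAttached G a b S X) (i : Fin 6) {s : V}
    (hs : s ∈ S) : ¬ G.black.Adj (b i) s :=
  fun h => hF.X_disj s ((hF.black_b_out i s (hF.S_disj s hs)).mp h) (Or.inr hs)

theorem not_red_adj_of_mem (hF : FenceAttached G a b S X) {x s : V} (hx : x ∈ fenceSet a b)
    (hs : s ∈ S) : ¬ G.red.Adj x s :=
  fun h => hF.S_disj s hs (hF.red_closed x hx s h)

theorem embed_injective (hF : FenceAttached G a b S X) (hz : z ∈ S) (hz' : z' ∈ S)
    (hzz' : z ≠ z') : Function.Injective (embed a b z z') := by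
  refine Function.Injective.sumElim ?_ ?_ ?_
  · exact hF.a_inj.sumElim hF.b_inj fun i j => hF.ab_ne i j
  · rintro (_ | _) (_ | _) h
    exacts [rfl, absurd h hzz', absurd h.symm hzz', rfl]
  · intro c t h
    change embed a b z z' (.inl c) = embed a b z z' (.inr t) at h
    exact hF.S_disj _ (embed_inr_mem hz hz' t) (h ▸ embed_inl_mem c)

theorem black_adj_embed_iff (hF : FenceAttached G a b S X) (hz : z ∈ S) (hz' : z' ∈ S)
    {m m' : FenceModel} (h : m.isLeft ∨ m'.isLeft) :
    G.black.Adj (embed a b z z' m) (embed a b z z' m') ↔ FenceModel.black m m' = true := by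
  have hS := embed_inr_mem (a := a) (b := b) hz hz'
  rcases m with (i | i) | t <;> rcases m' with (j | j) | t' <;>
    simp only [FenceModel.embed_inl_inl, FenceModel.embed_inl_inr, FenceModel.black,
      decide_eq_true_eq, Bool.false_eq_true, iff_true, iff_false] at h ⊢
  · exact hF.black_aa i j
  · exact hF.black_ab i j
  · exact hF.black_adj_a_of_mem i (hS t')
  · exact SimpleGraph.adj_comm .. |>.trans (hF.black_ab j i)
  · exact hF.black_bb i j
  · exact hF.not_black_adj_b_of_mem i (hS t')
  · exact (hF.black_adj_a_of_mem j (hS t)).symm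
  · exact fun h => hF.not_black_adj_b_of_mem j (hS t) h.symm
  · simp at h

theorem red_adj_embed_iff (hF : FenceAttached G a b S X) (hz : z ∈ S) (hz' : z' ∈ S)
    {m m' : FenceModel} (h : m.isLeft ∨ m'.isLeft) :
    G.red.Adj (embed a b z z' m) (embed a b z z' m') ↔ FenceModel.red m m' = true := by
  have hS := embed_inr_mem (a := a) (b := b) hz hz'
  have hF' : ∀ c, embed a b z z' (.inl c) ∈ fenceSet a b := embed_inl_mem
  rcases m with (i | i) | t <;> rcases m' with (j | j) | t' <;>
    simp only [FenceModel.embed_inl_inl, FenceModel.embed_inl_inr, FenceModel.red,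
      decide_eq_true_eq, Bool.false_eq_true, iff_false] at h ⊢
  · exact hF.red_aa i j
  · exact hF.red_ab i j
  · exact hF.not_red_adj_of_mem (hF' (.inl i)) (hS t')
  · exact SimpleGraph.adj_comm .. |>.trans (hF.red_ab j i)
  · exact hF.red_bb i j
  · exact hF.not_red_adj_of_mem (hF' (.inr i)) (hS t')
  · exact fun h => hF.not_red_adj_of_mem (hF' (.inl j)) (hS t) h.symm
  · exact fun h => hF.not_red_adj_of_mem (hF' (.inr j)) (hS t) h.symm
  · simp at h

theorem totAdj_embed_iff (hF : FenceAttached G a b S X) (hz : z ∈ S) (hz' : z' ∈ S)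
    {m m' : FenceModel} (h : m.isLeft ∨ m'.isLeft) :
    G.TotAdj (embed a b z z' m) (embed a b z z' m') ↔ FenceModel.tot m m' = true := by
  rw [TotAdj, FenceModel.tot, Bool.or_eq_true, hF.black_adj_embed_iff hz hz' h,
    hF.red_adj_embed_iff hz hz' h]

theorem not_rel_embed (hF : FenceAttached G a b S X) {P : Setoid V}
    (hfirst : ∀ f ∈ fenceSet a b, ∀ g ∈ fenceSet a b ∪ S, f ≠ g → ¬ P.r f g)
    (hz : z ∈ S) (hz' : z' ∈ S) (hzz' : ¬ P.r z z') {m m' : FenceModel} (hmm' : m ≠ m') :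
    ¬ P.r (embed a b z z' m) (embed a b z z' m') := by
  have hne := (hF.embed_injective hz hz' fun h => hzz' (h ▸ P.refl z)).ne hmm'
  rcases m with c | t
  · exact hfirst _ (embed_inl_mem c) _ (embed_mem hz hz' m') hne
  rcases m' with c | t'
  · exact fun h => hfirst _ (embed_inl_mem c) _ (embed_mem hz hz' _) hne.symm (P.symm h)
  rcases t with _ | _ <;> rcases t' with _ | _
  exacts [absurd rfl hmm', hzz', fun h => hzz' (P.symm h), absurd rfl hmm']

theorem not_redDegLE_four_quot_mergeSetoid [Finite V] (hF : FenceAttached G a b S X)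
    (hz : z ∈ S) (hz' : z' ∈ S) {P : Setoid V}
    (hsep : ∀ m m' : FenceModel, m ≠ m' → ¬ P.r (embed a b z z' m) (embed a b z z' m'))
    {c : Fin 6 ⊕ Fin 6} {m : FenceModel} (hm : m ≠ .inl c) :
    ¬ (G.quot (mergeSetoid P (embed a b z z' (.inl c)) (embed a b z z' m))).RedDegLE 4 := by
  set e := embed a b z z'
  set Q := mergeSetoid P (e (.inl c)) (e m)
  have hmc : Q.r (e m) (e (.inl c)) := Or.inr (Or.inr ⟨P.refl _, P.refl _⟩)
  suffices 5 ≤ ((G.quot Q).red.neighborSet (Quotient.mk Q (e (.inl c)))).ncard from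
    fun hdeg => absurd (hdeg (Quotient.mk Q (e (.inl c)))) (by omega)
  refine (FenceModel.five_le_card_witnesses c m hm).trans
    (card_le_ncard_red_neighborSet_quot (ι := e) ?_ ?_)
  · intro w hw w' hw' h
    simp only [FenceModel.witnesses, Finset.mem_filter] at hw hw'
    by_contra hne
    rcases h with h | ⟨h, -⟩ | ⟨h, -⟩
    exacts [hsep w w' hne h, hsep _ _ hw.2.1 h, hsep _ _ hw.2.2.1 h]
  · intro w hw
    simp only [FenceModel.witnesses, FenceModel.seesMergedRed, Finset.mem_filter,
      Bool.and_eq_true, Bool.or_eq_true, Bool.not_eq_true'] at hw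
    obtain ⟨-, hwc, hwm, hleft, htot, hblack⟩ := hw
    refine quot_red_adj ?_ ?_ ?_
    · rintro (h | ⟨-, h⟩ | ⟨h, -⟩)
      exacts [hsep _ _ (Ne.symm hwc) h, hsep _ _ (Ne.symm hwm) h, hsep _ _ hm.symm h]
    · rcases htot with h | h
      · exact ⟨_, Q.refl _, (hF.totAdj_embed_iff hz hz' (Or.inl rfl)).mpr h⟩
      · exact ⟨_, hmc, (hF.totAdj_embed_iff hz hz' hleft).mpr h⟩
    · rcases hblack with h | h
      · exact ⟨_, Q.refl _,
          (hF.black_adj_embed_iff hz hz' (Or.inl rfl)).not.mpr (Bool.eq_false_iff.mp h)⟩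
      · exact ⟨_, hmc, (hF.black_adj_embed_iff hz hz' hleft).not.mpr (Bool.eq_false_iff.mp h)⟩

theorem not_redDegLE_four_quot_mergeSetoid_of_first [Finite V] (hF : FenceAttached G a b S X)
    {P : Setoid V} (hfirst : ∀ f ∈ fenceSet a b, ∀ g ∈ fenceSet a b ∪ S, f ≠ g → ¬ P.r f g)
    {f g : V} (hf : f ∈ fenceSet a b) (hg : g ∈ fenceSet a b ∪ S) (hfg : f ≠ g)
    (hz : z ∈ S) (hz' : z' ∈ S) (hzz' : ¬ P.r z z') :
    ¬ (G.quot (mergeSetoid P f g)).RedDegLE 4 := by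
  obtain ⟨c, rfl⟩ := exists_embed_inl_eq (z := z) (z' := z') hf
  rcases hg with hgF | hgS
  · obtain ⟨d, rfl⟩ := exists_embed_inl_eq (z := z) (z' := z') hgF
    exact hF.not_redDegLE_four_quot_mergeSetoid hz hz'
      (fun _ _ => hF.not_rel_embed hfirst hz hz' hzz') fun h => hfg (h ▸ rfl)
  · obtain ⟨w, hw, hgw⟩ : ∃ w ∈ S, ¬ P.r g w := by
      by_contra! h
      exact hzz' (P.trans (P.symm (h z hz)) (h z' hz'))
    exact hF.not_redDegLE_four_quot_mergeSetoid (z := g) (z' := w) (m := .inr false) hgS hw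
      (fun _ _ => hF.not_rel_embed hfirst hgS hw hgw) (by simp)

end FenceAttached

theorem fence_first_contraction_after_S_single_general {V : Type} [Fintype V]
    (G : Trigraph V) (a b : Fin 6 → V) (S X : Set V)
    (hF : FenceAttached G a b S X)
    (L : List (Setoid V)) (P : Setoid V) (u v : V) (huv : ¬ P.r u v)
    (hL : G.IsPartialSeq 4 (L ++ [Trigraph.mergeSetoid P u v]))
    -- this is the first contraction involving a pair consisting of a vertex of
    -- `V(F)` and a vertex of `V(F) ∪ S`
    (hfirst : ∀ f ∈ fenceSet a b, ∀ g ∈ fenceSet a b ∪ S, f ≠ g → ¬ P.r f g)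
    (hinv : ∃ f ∈ fenceSet a b, ∃ g ∈ fenceSet a b ∪ S,
        (P.r f u ∧ P.r g v) ∨ (P.r f v ∧ P.r g u)) :
    -- `S` is already contained in a single part
    ∀ z ∈ S, ∀ z' ∈ S, P.r z z' := by
  by_contra! hS
  obtain ⟨z, hz, z', hz', hzz'⟩ := hS
  obtain ⟨f, hf, g, hg, hfuv⟩ := hinv
  have hmerge : mergeSetoid P u v = mergeSetoid P f g := by
    rcases hfuv with ⟨hfu, hgv⟩ | ⟨hfv, hgu⟩
    · exact mergeSetoid_congr (P.symm hfu) (P.symm hgv)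
    · rw [mergeSetoid_comm]
      exact mergeSetoid_congr (P.symm hfv) (P.symm hgu)
  have hfg : f ≠ g := by
    rintro rfl
    rcases hfuv with ⟨hu, hv⟩ | ⟨hv, hu⟩ <;> exact huv (P.trans (P.symm hu) hv)
  have hdeg := hL.2 _ (List.mem_append_right L (List.mem_singleton_self _))
  rw [hmerge] at hdeg
  exact hF.not_redDegLE_four_quot_mergeSetoid_of_first hfirst hf hg hfg hz hz' hzz' hdeg

theorem fence_first_contraction_after_S_single {V : Type} [Fintype V]
    (G : Trigraph V) (a b : Fin 6 → V) (S X : Set V)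
    (hF : FenceAttached G a b S X)
    (L : List (Setoid V)) (P : Setoid V) (u v : V) (huv : ¬ P.r u v)
    (hL : G.IsPartialSeq 4 (L ++ [Trigraph.mergeSetoid P u v]))
    (hP : L.getLast? = some P)
    -- this is the first contraction involving a pair consisting of a vertex of
    -- `V(F)` and a vertex of `V(F) ∪ S`
    (hfirst : ∀ f ∈ fenceSet a b, ∀ g ∈ fenceSet a b ∪ S, f ≠ g → ¬ P.r f g)
    (hinv : ∃ f ∈ fenceSet a b, ∃ g ∈ fenceSet a b ∪ S,
        (P.r f u ∧ P.r g v) ∨ (P.r f v ∧ P.r g u)) :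
    -- `S` is already contained in a single part
    ∀ z ∈ S, ∀ z' ∈ S, P.r z z' :=
  fence_first_contraction_after_S_single_general G a b S X hF L P u v huv hL hfirst hinv
end

section
/- Let G be a trigraph containing two vertical sets V^j (with vertical pair x^j, y^j) and V^{j'} (with vertical pair x^{j'}, y^{j'}) together with a propagation gadget (arc) from V^j to V^{j'}, where the fence gadget of V^j satisfies the attachment rule in G with x^{j'} belonging to its set X and y^{j'} belonging to its set Y, and the fence gadget of V^{j'} also satisfies the attachment rule in G. Then in any partial 4-sequence from G, any contraction involving a pair of vertices of V^{j'} can only occur at a moment when x^j and y^j lie in a common part (i.e., the pair x^j, y^j has already been contracted, possibly by that very contraction). -/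
open Trigraph

/-- The 14 vertices of a vertical set: the vertical pair `x, y` together with the
12 vertices of the fence gadget attached to `{x, y}`. -/
def verticalSet {V : Type} (x y : V) (a b : Fin 6 → V) : Set V :=
  {x, y} ∪ fenceSet a b

/-!
As long as `xj` and `yj` lie in different parts, the 28 vertices of `V^j ∪ V^{j'}` lie in
pairwise distinct parts. The hypotheses force enough black edges, red edges and black
non-edges among these 28 vertices that any two of them other than `xj, yj` have at least five
distinguishers among the others: vertices adjacent to one of the two and not black-adjacent to
one of the two. Contracting the two while the others are still in distinct parts makes these
five vertices red neighbours of the merged part, which a partial 4-sequence forbids. The count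
of distinguishers is a finite check on 28 labels. A contraction involving two vertices of
`V^{j'}` puts two of the 28 vertices into one part, so after it `xj` and `yj` share a part.
-/

namespace Trigraph

variable {V : Type}

theorem mergeSetoid_rel_of_rel_of_rel {P : Setoid V} {u v a b : V} (ha : P.r a u)
    (hb : P.r b v) : (mergeSetoid P u v).r a b :=
  Or.inr (Or.inl ⟨ha, P.symm hb⟩)

theorem eq_or_of_mergeSetoid_rel {ι : Type} {P : Setoid V} {f : ι → V}
    (hf : ∀ i j, P.r (f i) (f j) → i = j) {u v : V} {s t : ι} (hs : P.r (f s) u)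
    (ht : P.r (f t) v) {i j : ι} (h : (mergeSetoid P u v).r (f i) (f j)) :
    i = j ∨ (i = s ∧ j = t) ∨ (i = t ∧ j = s) := by
  rcases h with h | ⟨hi, hj⟩ | ⟨hi, hj⟩
  · exact Or.inl (hf i j h)
  · exact Or.inr (Or.inl ⟨hf i s (P.trans hi (P.symm hs)),
      hf j t (P.trans (P.symm hj) (P.symm ht))⟩)
  · exact Or.inr (Or.inr ⟨hf i t (P.trans hi (P.symm ht)),
      hf j s (P.trans (P.symm hj) (P.symm hs))⟩)

theorem quot_red_adj_s17 {G : Trigraph V} {Q : Setoid V} {p p' w : V} (hpp' : Q.r p p')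
    (hpw : ¬ Q.r p w) (hadj : G.TotAdj p w ∨ G.TotAdj p' w)
    (hnb : ¬ G.black.Adj p w ∨ ¬ G.black.Adj p' w) :
    (G.quot Q).red.Adj (Quotient.mk Q p) (Quotient.mk Q w) := by
  have hp' : Quotient.mk Q p' = Quotient.mk Q p := Quotient.sound (Q.symm hpp')
  refine ⟨fun h => hpw (Quotient.exact h), fun hall => ?_, ?_⟩
  · rcases hnb with hnb | hnb
    · exact hnb (hall _ _ rfl rfl)
    · exact hnb (hall _ _ hp' rfl)
  · rcases hadj with hadj | hadj
    · exact ⟨p, w, rfl, rfl, hadj⟩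
    · exact ⟨p', w, hp', rfl, hadj⟩

theorem card_le_of_redDegLE [Finite V] {G : Trigraph V} {Q : Setoid V} {d : ℕ}
    (hdeg : (G.quot Q).RedDegLE d) {ι : Type} (s : Finset ι) (w : ι → V) {p p' : V}
    (hpp' : Q.r p p') (hw : ∀ i ∈ s, ∀ j ∈ s, Q.r (w i) (w j) → i = j)
    (hpw : ∀ i ∈ s, ¬ Q.r p (w i)) (hadj : ∀ i ∈ s, G.TotAdj p (w i) ∨ G.TotAdj p' (w i))
    (hnb : ∀ i ∈ s, ¬ G.black.Adj p (w i) ∨ ¬ G.black.Adj p' (w i)) : s.card ≤ d := by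
  calc s.card = (s : Set ι).ncard := (Set.ncard_coe_finset s).symm
    _ ≤ ((G.quot Q).red.neighborSet (Quotient.mk Q p)).ncard :=
        Set.ncard_le_ncard_of_injOn (fun i => Quotient.mk Q (w i))
          (fun i hi => quot_red_adj_s17 hpp' (hpw i hi) (hadj i hi) (hnb i hi))
          (fun i hi j hj h => hw i hi j hj (Quotient.exact h)) (Set.toFinite _)
    _ ≤ d := hdeg _

theorem IsPartialSeq.forall_mem {G : Trigraph V} {d : ℕ} {L : List (Setoid V)}
    (hL : G.IsPartialSeq d L) (I : Setoid V → Prop) (hbot : I ⊥)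
    (hstep : ∀ ⦃P Q : Setoid V⦄, MergeStep P Q → (G.quot Q).RedDegLE d → I P → I Q) :
    ∀ P ∈ L, I P := by
  have hchain : L.IsChain fun P Q => MergeStep P Q ∧ (G.quot Q).RedDegLE d :=
    hL.1.2.imp_of_mem_imp fun _ Q _ hQ h => ⟨h, hL.2 Q hQ⟩
  refine hchain.induction I L (fun _ _ h => hstep h.1 h.2) fun hne => ?_
  rwa [(List.head_eq_iff_head?_eq_some hne).mpr hL.1.1]

end Trigraph

/-- Names for the 28 vertices of `V^j` (`x`, `y`, `a i`, `b i`) and of `V^{j'}`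
(`x'`, `y'`, `a' i`, `b' i`). -/
inductive Label
  | x | y | x' | y'
  | a (i : Fin 6) | b (i : Fin 6) | a' (i : Fin 6) | b' (i : Fin 6)
  deriving DecidableEq, Fintype

namespace Label

/-! The three tables below list, each pair in one orientation only, the black edges, red
edges and black non-edges among the labels that the hypotheses force. -/

def blackTable : Label → Label → Bool
  | a i, a j | b i, b j | a' i, a' j | b' i, b' j => decide (j = i + 1 ∨ i = j + 1)
  | a i, b j | a' i, b' j => decide (i = 5 ∧ j = 0)
  | a _, x | a _, y | a _, x' | b _, x' | a' _, x' | a' _, y' | x', x | x', y => true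
  | _, _ => false

def redTable : Label → Label → Bool
  | a i, b j | a' i, b' j => decide (j = i ∨ (j : ℕ) = i + 1)
  | _, _ => false

def nonBlackTable : Label → Label → Bool
  | a i, a j | b i, b j | a' i, a' j | b' i, b' j => decide ¬(j = i + 1 ∨ i = j + 1)
  | a i, b j | a' i, b' j => decide ¬(i = 5 ∧ j = 0)
  | b _, x | b _, y | b' _, x' | b' _, y' | a _, y' | b _, y' => true
  | a _, a' _ | a _, b' _ | b _, a' _ | b _, b' _ => true
  | _, _ => false

def black (s t : Label) : Bool := blackTable s t || blackTable t s

def nonBlack (s t : Label) : Bool := nonBlackTable s t || nonBlackTable t s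

def adj (s t : Label) : Bool := black s t || redTable s t || redTable t s

def distinguishers (s t : Label) : Finset Label :=
  Finset.univ.filter fun r =>
    r ≠ s ∧ r ≠ t ∧ (adj s r ∨ adj t r) ∧ (nonBlack s r ∨ nonBlack t r)

theorem adj_or_exists_black_nonBlack : ∀ s t : Label, s ≠ t →
    ¬ (s = x ∧ t = y) → ¬ (s = y ∧ t = x) →
    ¬ (s = x' ∧ t = y') → ¬ (s = y' ∧ t = x') →
    adj s t ∨ ∃ r, black s r ∧ nonBlack t r ∨ black t r ∧ nonBlack s r := by
  decide

theorem five_le_card_distinguishers : ∀ s t : Label, s ≠ t → ¬ (s = x ∧ t = y) →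
    ¬ (s = y ∧ t = x) → 5 ≤ (distinguishers s t).card := by
  decide

end Label

namespace FenceAttached

variable {V : Type} {G : Trigraph V} {a b : Fin 6 → V} {S X : Set V}

theorem black_a_of_mem_S (F : FenceAttached G a b S X) (i : Fin 6) {z : V}
    (hz : z ∈ S) : G.black.Adj (a i) z :=
  (F.black_a_out i z (F.S_disj z hz)).mpr (Or.inr hz)

theorem black_a_of_mem_X (F : FenceAttached G a b S X) (i : Fin 6) {z : V}
    (hz : z ∈ X) : G.black.Adj (a i) z :=
  (F.black_a_out i z fun h => F.X_disj z hz (Or.inl h)).mpr (Or.inl hz)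

theorem black_b_of_mem_X (F : FenceAttached G a b S X) (i : Fin 6) {z : V}
    (hz : z ∈ X) : G.black.Adj (b i) z :=
  (F.black_b_out i z fun h => F.X_disj z hz (Or.inl h)).mpr hz

theorem not_totAdj_b_of_mem_S (F : FenceAttached G a b S X) (i : Fin 6) {z : V}
    (hz : z ∈ S) : ¬ G.TotAdj (b i) z := by
  have hzF := F.S_disj z hz
  rintro (hbl | hr)
  · exact F.X_disj z ((F.black_b_out i z hzF).mp hbl) (Or.inr hz)
  · exact hzF (F.red_closed _ (Or.inr ⟨i, rfl⟩) z hr)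

theorem not_totAdj_of_notMem (F : FenceAttached G a b S X) {t z : V} (ht : t ∈ fenceSet a b)
    (hz : z ∉ fenceSet a b ∪ S ∪ X) : ¬ G.TotAdj t z := by
  have hzF : z ∉ fenceSet a b := fun h => hz (Or.inl (Or.inl h))
  rcases ht with ⟨i, rfl⟩ | ⟨i, rfl⟩ <;> rintro (hbl | hr)
  · rcases (F.black_a_out i z hzF).mp hbl with h | h
    · exact hz (Or.inr h)
    · exact hz (Or.inl (Or.inr h))
  · exact hzF (F.red_closed _ (Or.inl ⟨i, rfl⟩) z hr)
  · exact hz (Or.inr ((F.black_b_out i z hzF).mp hbl))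
  · exact hzF (F.red_closed _ (Or.inr ⟨i, rfl⟩) z hr)

end FenceAttached

/-- Two vertical sets `V^j`, `V^{j'}` and a propagation gadget from `V^j` to `V^{j'}`. -/
structure Propagation {V : Type} (G : Trigraph V) where
  xj : V
  yj : V
  aj : Fin 6 → V
  bj : Fin 6 → V
  Xj : Set V
  xj' : V
  yj' : V
  aj' : Fin 6 → V
  bj' : Fin 6 → V
  Xj' : Set V
  hxyj : xj ≠ yj
  hxyj' : xj' ≠ yj'
  hFj : FenceAttached G aj bj {xj, yj} Xj
  hFj' : FenceAttached G aj' bj' {xj', yj'} Xj'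
  hx' : xj' ∈ Xj
  hy' : yj' ∉ fenceSet aj bj ∪ {xj, yj} ∪ Xj

namespace Propagation

variable {V : Type} {G : Trigraph V} (C : Propagation G)

def emb : Label → V
  | .x => C.xj
  | .y => C.yj
  | .x' => C.xj'
  | .y' => C.yj'
  | .a i => C.aj i
  | .b i => C.bj i
  | .a' i => C.aj' i
  | .b' i => C.bj' i

theorem xj'_notMem_fence : C.xj' ∉ fenceSet C.aj C.bj :=
  fun h => C.hFj.X_disj _ C.hx' (Or.inl h)

theorem yj'_notMem_fence : C.yj' ∉ fenceSet C.aj C.bj := fun h => C.hy' (Or.inl (Or.inl h))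

theorem not_totAdj_yj' {t : V} (ht : t ∈ fenceSet C.aj C.bj) : ¬ G.TotAdj t C.yj' :=
  C.hFj.not_totAdj_of_notMem ht C.hy'

theorem notMem_Xj'_of_mem_fence {t : V} (ht : t ∈ fenceSet C.aj C.bj) : t ∉ C.Xj' := fun hX =>
  C.not_totAdj_yj' ht (Or.inl (C.hFj'.X_black_S t hX C.yj' (Or.inr rfl)))

theorem notMem_fence'_of_mem_fence {t : V} (ht : t ∈ fenceSet C.aj C.bj) :
    t ∉ fenceSet C.aj' C.bj' := by
  rintro (⟨i, rfl⟩ | ⟨i, rfl⟩)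
  · exact C.not_totAdj_yj' ht (Or.inl (C.hFj'.black_a_of_mem_S i (Or.inr rfl)))
  · have hbl : G.black.Adj (C.bj' i) C.xj' := by
      rcases ht with ⟨k, hk⟩ | ⟨k, hk⟩
      · exact hk ▸ C.hFj.black_a_of_mem_X k C.hx'
      · exact hk ▸ C.hFj.black_b_of_mem_X k C.hx'
    exact C.hFj'.not_totAdj_b_of_mem_S i (Or.inl rfl) (Or.inl hbl)

theorem not_totAdj_fence'_fence {t z : V} (ht : t ∈ fenceSet C.aj' C.bj')
    (hz : z ∈ fenceSet C.aj C.bj) : ¬ G.TotAdj t z := by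
  refine C.hFj'.not_totAdj_of_notMem ht ?_
  rintro ((h | rfl | rfl) | h)
  · exact C.notMem_fence'_of_mem_fence hz h
  · exact C.xj'_notMem_fence hz
  · exact C.yj'_notMem_fence hz
  · exact C.notMem_Xj'_of_mem_fence hz h

theorem black_of_blackTable {s t : Label} (h : s.blackTable t) :
    G.black.Adj (C.emb s) (C.emb t) := by
  cases s <;> cases t <;>
    simp only [Label.blackTable, decide_eq_true_eq, Bool.false_eq_true] at h <;>
    simp only [emb] <;>
    first
    | exact (C.hFj.black_aa _ _).2 h
    | exact (C.hFj.black_bb _ _).2 h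
    | exact (C.hFj.black_ab _ _).2 h
    | exact (C.hFj'.black_aa _ _).2 h
    | exact (C.hFj'.black_bb _ _).2 h
    | exact (C.hFj'.black_ab _ _).2 h
    | exact C.hFj.black_a_of_mem_S _ (Or.inl rfl)
    | exact C.hFj.black_a_of_mem_S _ (Or.inr rfl)
    | exact C.hFj'.black_a_of_mem_S _ (Or.inl rfl)
    | exact C.hFj'.black_a_of_mem_S _ (Or.inr rfl)
    | exact C.hFj.black_a_of_mem_X _ C.hx'
    | exact C.hFj.black_b_of_mem_X _ C.hx'
    | exact C.hFj.X_black_S _ C.hx' _ (Or.inl rfl)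
    | exact C.hFj.X_black_S _ C.hx' _ (Or.inr rfl)

theorem red_of_redTable {s t : Label} (h : s.redTable t) : G.red.Adj (C.emb s) (C.emb t) := by
  cases s <;> cases t <;> simp only [Label.redTable, Bool.false_eq_true] at h <;>
    simp only [emb]
  · exact (C.hFj.red_ab _ _).2 (of_decide_eq_true h)
  · exact (C.hFj'.red_ab _ _).2 (of_decide_eq_true h)

theorem not_black_of_nonBlackTable {s t : Label} (h : s.nonBlackTable t) :
    ¬ G.black.Adj (C.emb s) (C.emb t) := by
  intro hbl
  cases s <;> cases t <;>
    simp only [Label.nonBlackTable, decide_eq_true_eq, Bool.false_eq_true] at h <;>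
    simp only [emb] at hbl <;>
    first
    | exact h ((C.hFj.black_aa _ _).1 hbl)
    | exact h ((C.hFj.black_bb _ _).1 hbl)
    | exact h ((C.hFj.black_ab _ _).1 hbl)
    | exact h ((C.hFj'.black_aa _ _).1 hbl)
    | exact h ((C.hFj'.black_bb _ _).1 hbl)
    | exact h ((C.hFj'.black_ab _ _).1 hbl)
    | exact C.hFj.not_totAdj_b_of_mem_S _ (Or.inl rfl) (Or.inl hbl)
    | exact C.hFj.not_totAdj_b_of_mem_S _ (Or.inr rfl) (Or.inl hbl)
    | exact C.hFj'.not_totAdj_b_of_mem_S _ (Or.inl rfl) (Or.inl hbl)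
    | exact C.hFj'.not_totAdj_b_of_mem_S _ (Or.inr rfl) (Or.inl hbl)
    | exact C.not_totAdj_yj' (Or.inl ⟨_, rfl⟩) (Or.inl hbl)
    | exact C.not_totAdj_yj' (Or.inr ⟨_, rfl⟩) (Or.inl hbl)
    | exact C.not_totAdj_fence'_fence (Or.inl ⟨_, rfl⟩) (Or.inl ⟨_, rfl⟩) (.inl hbl.symm)
    | exact C.not_totAdj_fence'_fence (Or.inl ⟨_, rfl⟩) (Or.inr ⟨_, rfl⟩) (.inl hbl.symm)
    | exact C.not_totAdj_fence'_fence (Or.inr ⟨_, rfl⟩) (Or.inl ⟨_, rfl⟩) (.inl hbl.symm)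
    | exact C.not_totAdj_fence'_fence (Or.inr ⟨_, rfl⟩) (Or.inr ⟨_, rfl⟩) (.inl hbl.symm)

theorem black_emb {s t : Label} (h : s.black t) : G.black.Adj (C.emb s) (C.emb t) := by
  rcases Bool.or_eq_true_iff.mp h with h | h
  exacts [C.black_of_blackTable h, (C.black_of_blackTable h).symm]

theorem not_black_emb {s t : Label} (h : s.nonBlack t) : ¬ G.black.Adj (C.emb s) (C.emb t) := by
  rcases Bool.or_eq_true_iff.mp h with h | h
  exacts [C.not_black_of_nonBlackTable h, fun hbl => C.not_black_of_nonBlackTable h hbl.symm]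

theorem totAdj_emb {s t : Label} (h : s.adj t) : G.TotAdj (C.emb s) (C.emb t) := by
  simp only [Label.adj, Bool.or_eq_true_iff] at h
  rcases h with (h | h) | h
  exacts [Or.inl (C.black_emb h), Or.inr (C.red_of_redTable h), Or.inr (C.red_of_redTable h).symm]

theorem emb_injective : Function.Injective C.emb := by
  intro s t hst
  by_contra hne
  rcases Label.adj_or_exists_black_nonBlack s t hne
      (by rintro ⟨rfl, rfl⟩; exact C.hxyj hst)
      (by rintro ⟨rfl, rfl⟩; exact C.hxyj hst.symm)
      (by rintro ⟨rfl, rfl⟩; exact C.hxyj' hst)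
      (by rintro ⟨rfl, rfl⟩; exact C.hxyj' hst.symm)
    with h | ⟨r, ⟨hs, ht⟩ | ⟨ht, hs⟩⟩
  · rcases C.totAdj_emb h with h | h
    exacts [G.black.loopless.irrefl _ (hst ▸ h), G.red.loopless.irrefl _ (hst ▸ h)]
  · exact C.not_black_emb ht (hst ▸ C.black_emb hs)
  · exact C.not_black_emb hs (hst ▸ C.black_emb ht)

theorem exists_emb_eq {z : V} (hz : z ∈ verticalSet C.xj' C.yj' C.aj' C.bj') :
    ∃ s, C.emb s = z := by
  rcases hz with (rfl | rfl) | ⟨i, rfl⟩ | ⟨i, rfl⟩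
  exacts [⟨.x', rfl⟩, ⟨.y', rfl⟩, ⟨.a' i, rfl⟩, ⟨.b' i, rfl⟩]

def Separates (P : Setoid V) : Prop := ∀ s t, P.r (C.emb s) (C.emb t) → s = t

theorem separates_bot : C.Separates ⊥ := fun _ _ h => C.emb_injective h

theorem not_redDegLE_of_mergeSetoid [Finite V] {P : Setoid V} (hP : C.Separates P) {u v : V}
    {s t : Label} (hs : P.r (C.emb s) u) (ht : P.r (C.emb t) v) (hst : s ≠ t)
    (hxy : ¬ (mergeSetoid P u v).r C.xj C.yj) :
    ¬ (G.quot (mergeSetoid P u v)).RedDegLE 4 := by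
  intro hdeg
  have hmerged : (mergeSetoid P u v).r (C.emb s) (C.emb t) :=
    mergeSetoid_rel_of_rel_of_rel hs ht
  have hfive := Label.five_le_card_distinguishers s t hst
    (by rintro ⟨rfl, rfl⟩; exact hxy hmerged)
    (by rintro ⟨rfl, rfl⟩; exact hxy ((mergeSetoid P u v).symm hmerged))
  have hrel : ∀ {i j}, (mergeSetoid P u v).r (C.emb i) (C.emb j) →
      i = j ∨ (i = s ∧ j = t) ∨ (i = t ∧ j = s) :=
    eq_or_of_mergeSetoid_rel hP hs ht
  have hdist : ∀ r ∈ Label.distinguishers s t, r ≠ s ∧ r ≠ t ∧ (s.adj r ∨ t.adj r) ∧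
      (s.nonBlack r ∨ t.nonBlack r) := fun r hr => (Finset.mem_filter.mp hr).2
  have hfour := card_le_of_redDegLE hdeg (Label.distinguishers s t) C.emb hmerged
    (fun i hi j hj h => by
      obtain ⟨his, hit, -⟩ := hdist i hi
      rcases hrel h with h | h | h
      exacts [h, absurd h.1 his, absurd h.1 hit])
    (fun r hr h => by
      obtain ⟨hrs, hrt, -⟩ := hdist r hr
      rcases hrel h with h | h | h
      exacts [hrs h.symm, hrt h.2, hrs h.2])
    (fun r hr => (hdist r hr).2.2.1.imp C.totAdj_emb C.totAdj_emb)
    (fun r hr => (hdist r hr).2.2.2.imp C.not_black_emb C.not_black_emb)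
  omega

theorem separates_mergeSetoid [Finite V] {P : Setoid V} (hP : C.Separates P) {u v : V}
    (hxy : ¬ (mergeSetoid P u v).r C.xj C.yj) (hdeg : (G.quot (mergeSetoid P u v)).RedDegLE 4) :
    C.Separates (mergeSetoid P u v) := by
  rintro s t (h | ⟨hs, ht⟩ | ⟨hs, ht⟩)
  · exact hP s t h
  · by_contra hst
    exact C.not_redDegLE_of_mergeSetoid hP hs (P.symm ht) hst hxy hdeg
  · by_contra hst
    rw [mergeSetoid_comm] at hxy hdeg
    exact C.not_redDegLE_of_mergeSetoid hP hs (P.symm ht) hst hxy hdeg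

theorem separates_of_mem [Finite V] {L : List (Setoid V)} (hL : G.IsPartialSeq 4 L) :
    ∀ P ∈ L, ¬ P.r C.xj C.yj → C.Separates P :=
  hL.forall_mem _ (fun _ => C.separates_bot) fun P _ ⟨u, v, _, hQ⟩ hdeg hP hxy => by
    subst hQ
    exact C.separates_mergeSetoid (hP fun h => hxy (Or.inl h)) hxy hdeg

end Propagation

theorem propagation_forces_guard_contraction_general {V : Type} [Fintype V] (G : Trigraph V)
    -- the guarding vertical set `V^j`
    (xj yj : V) (aj bj : Fin 6 → V) (Xj : Set V)
    -- the guarded vertical set `V^{j'}`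
    (xj' yj' : V) (aj' bj' : Fin 6 → V) (Xj' : Set V)
    (hxyj : xj ≠ yj) (hxyj' : xj' ≠ yj')
    (hFj : FenceAttached G aj bj {xj, yj} Xj)
    (hFj' : FenceAttached G aj' bj' {xj', yj'} Xj')
    -- the propagation gadget from `V^j` to `V^{j'}`: `x^{j'}` is in the set `X` of
    -- the fence of `V^j`, and `y^{j'}` is in its set `Y`
    (hx' : xj' ∈ Xj)
    (hy' : yj' ∉ fenceSet aj bj ∪ {xj, yj} ∪ Xj)
    (L : List (Setoid V)) (P Q : Setoid V) (u v : V) (huv : ¬ P.r u v)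
    (hQ : Q = Trigraph.mergeSetoid P u v)
    (hL : G.IsPartialSeq 4 (L ++ [Q]))
    -- the contraction from `P` to `Q` involves a pair of vertices of `V^{j'}`
    (hinv : ∃ f ∈ verticalSet xj' yj' aj' bj', ∃ g ∈ verticalSet xj' yj' aj' bj',
        (P.r f u ∧ P.r g v) ∨ (P.r f v ∧ P.r g u)) :
    -- then `x^j` and `y^j` lie in a common part (possibly merged by this very
    -- contraction)
    Q.r xj yj := by
  let C : Propagation G :=
    ⟨xj, yj, aj, bj, Xj, xj', yj', aj', bj', Xj', hxyj, hxyj', hFj, hFj', hx', hy'⟩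
  by_contra hxy
  have hsep : C.Separates Q := C.separates_of_mem hL Q (by simp) hxy
  obtain ⟨f, hf, g, hg, hfg⟩ := hinv
  obtain ⟨s, rfl⟩ := C.exists_emb_eq hf
  obtain ⟨t, rfl⟩ := C.exists_emb_eq hg
  subst hQ
  rcases hfg with ⟨hu, hv⟩ | ⟨hv, hu⟩
  · obtain rfl := hsep s t (mergeSetoid_rel_of_rel_of_rel hu hv)
    exact huv (P.trans (P.symm hu) hv)
  · obtain rfl := hsep s t ((mergeSetoid P u v).symm (mergeSetoid_rel_of_rel_of_rel hu hv))
    exact huv (P.trans (P.symm hu) hv)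

theorem propagation_forces_guard_contraction {V : Type} [Fintype V] (G : Trigraph V)
    -- the guarding vertical set `V^j`
    (xj yj : V) (aj bj : Fin 6 → V) (Xj : Set V)
    -- the guarded vertical set `V^{j'}`
    (xj' yj' : V) (aj' bj' : Fin 6 → V) (Xj' : Set V)
    (hxyj : xj ≠ yj) (hxyj' : xj' ≠ yj')
    (hFj : FenceAttached G aj bj {xj, yj} Xj)
    (hFj' : FenceAttached G aj' bj' {xj', yj'} Xj')
    -- the propagation gadget from `V^j` to `V^{j'}`: `x^{j'}` is in the set `X` of
    -- the fence of `V^j`, and `y^{j'}` is in its set `Y`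
    (hx' : xj' ∈ Xj)
    (hy' : yj' ∉ fenceSet aj bj ∪ {xj, yj} ∪ Xj)
    (L : List (Setoid V)) (P Q : Setoid V) (u v : V) (huv : ¬ P.r u v)
    (hQ : Q = Trigraph.mergeSetoid P u v)
    (hL : G.IsPartialSeq 4 (L ++ [Q])) (hP : L.getLast? = some P)
    -- the contraction from `P` to `Q` involves a pair of vertices of `V^{j'}`
    (hinv : ∃ f ∈ verticalSet xj' yj' aj' bj', ∃ g ∈ verticalSet xj' yj' aj' bj',
        (P.r f u ∧ P.r g v) ∨ (P.r f v ∧ P.r g u)) :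
    -- then `x^j` and `y^j` lie in a common part (possibly merged by this very
    -- contraction)
    Q.r xj yj :=
  propagation_forces_guard_contraction_general G xj yj aj bj Xj xj' yj' aj' bj' Xj' hxyj hxyj' hFj
    hFj' hx' hy' L P Q u v huv hQ hL hinv
end
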